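/- arXiv:0812.0463 — 4 statements merged into one kernel-verified Lean document; each statement's English description precedes it below -/
import Mathlib

section
/- The number of fixed-point-free involutions of {1,...,2h} avoiding 4321 equals the Catalan number C_h, and moreover a fixed-point-free involution avoids 4321 if and only if it avoids 321; i.e., the set of fixed-point-free involutions of {1,...,2h} avoiding 321 coincides with the set avoiding 4321. -/
def Av4321 {n : ℕ} (σ : Equiv.Perm (Fin n)) : Prop :=
  ¬ ∃ i j k l : Fin n, i < j ∧ j < k ∧ k < l ∧ σ l < σ k ∧ σ k < σ j ∧ σ j < σ i

def Av321 {n : ℕ} (σ : Equiv.Perm (Fin n)) : Prop :=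
  ¬ ∃ i j k : Fin n, i < j ∧ j < k ∧ σ k < σ j ∧ σ j < σ i

/-!
A fixed-point-free involution `τ` pairs every opener `i < τ i` with a closer `τ i`. The partner
of the middle entry of a `321` pattern extends it to a `4321` pattern, so the two avoidance
conditions agree. Avoiding `321` means that `τ` is increasing on its openers, i.e. that the
`k`-th opener is paired with the `k`-th closer, so `τ` is determined by its set of openers. A set
`s` arises in this way iff every initial segment contains at least as many elements of `s` as of
its complement (this is what makes the `k`-th element of `s` precede the `k`-th element of `sᶜ`),
i.e. iff marking `s` by up-steps and `sᶜ` by down-steps gives a Dyck word; these are counted by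
the Catalan numbers.
-/

open Finset DyckStep Function

theorem Equiv.Perm.mul_self_eq_one_iff_involutive {α : Type*} {τ : Equiv.Perm α} :
    τ * τ = 1 ↔ Involutive τ := by
  simp [Equiv.ext_iff, Involutive]

theorem List.count_take_ofFn {α : Type*} [DecidableEq α] {n : ℕ} (f : Fin n → α) (x : α)
    (m : ℕ) : ((List.ofFn f).take m).count x = #{i : Fin n | (i : ℕ) < m ∧ f i = x} := by
  have hcount (l : List α) : l.count x = (l.map fun y => if y = x then 1 else 0).sum := by
    induction l with
    | nil => rfl
    | cons a l ih => simp [List.count_cons, ih, add_comm]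
  rw [hcount, List.map_take, List.map_ofFn, List.sum_take_ofFn]
  simp [sum_boole, Finset.filter_filter]

theorem Finset.card_filter_lt_orderEmbOfFin {α : Type*} [LinearOrder α] (s : Finset α) {k : ℕ}
    (h : #s = k) (j : Fin k) : #{x ∈ s | x < s.orderEmbOfFin h j} = j := by
  have : {x ∈ s | x < s.orderEmbOfFin h j} = (Iio j).map (s.orderEmbOfFin h).toEmbedding := by
    ext x
    simp only [mem_filter, mem_map, mem_Iio, RelEmbedding.coe_toEmbedding]
    constructor
    · rintro ⟨hx, hxj⟩
      obtain ⟨i, rfl⟩ : x ∈ Set.range (s.orderEmbOfFin h) := by simpa using hx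
      exact ⟨i, (s.orderEmbOfFin h).lt_iff_lt.mp hxj, rfl⟩
    · rintro ⟨i, hij, rfl⟩
      exact ⟨s.orderEmbOfFin_mem h i, (s.orderEmbOfFin h).lt_iff_lt.mpr hij⟩
  rw [this, card_map, Fin.card_Iio]

theorem StrictMonoOn.eqOn_of_image_eq {α β : Type*} [LinearOrder α] [LinearOrder β]
    {s : Finset α} {f g : α → β} (hf : StrictMonoOn f s) (hg : StrictMonoOn g s)
    (himage : s.image f = s.image g) : Set.EqOn f g s := by
  set e := s.orderEmbOfFin rfl
  have hcomp {f : α → β} (hf : StrictMonoOn f s) :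
      f ∘ e = (s.image f).orderEmbOfFin (card_image_of_injOn hf.injOn) :=
    orderEmbOfFin_unique _ (fun j => mem_image_of_mem f (s.orderEmbOfFin_mem rfl j))
      fun i j hij => hf (s.orderEmbOfFin_mem rfl i) (s.orderEmbOfFin_mem rfl j) (e.strictMono hij)
  intro x hx
  obtain ⟨j, rfl⟩ : x ∈ Set.range e := by simpa [e] using hx
  have hfg : f ∘ e = g ∘ e := by
    rw [hcomp hf, hcomp hg]
    simp_rw [himage]
  exact congrFun hfg j

section Openers

variable {α : Type*} [LinearOrder α] [Fintype α]

def openers (τ : Equiv.Perm α) : Finset α := {i | i < τ i}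

variable {τ : Equiv.Perm α}

@[simp]
theorem mem_openers {i : α} : i ∈ openers τ ↔ i < τ i := by simp [openers]

theorem apply_lt_of_notMem_openers (hfix : ∀ i, τ i ≠ i) {i : α} (hi : i ∉ openers τ) :
    τ i < i :=
  (hfix i).lt_of_le (not_lt.mp (mt mem_openers.mpr hi))

theorem apply_mem_openers_iff (hτ : Involutive τ) (hfix : ∀ i, τ i ≠ i) {i : α} :
    τ i ∈ openers τ ↔ i ∉ openers τ := by
  rw [mem_openers, mem_openers, hτ, not_lt]
  exact ⟨le_of_lt, (hfix i).lt_of_le⟩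

theorem image_openers (hτ : Involutive τ) (hfix : ∀ i, τ i ≠ i) :
    (openers τ).image τ = (openers τ)ᶜ := by
  ext i
  rw [mem_image, mem_compl]
  constructor
  · rintro ⟨j, hj, rfl⟩ hτj
    exact (apply_mem_openers_iff hτ hfix).mp hτj hj
  · exact fun hi => ⟨τ i, (apply_mem_openers_iff hτ hfix).mpr hi, hτ i⟩

theorem card_openers_eq_card_compl (hτ : Involutive τ) (hfix : ∀ i, τ i ≠ i) :
    #(openers τ) = #(openers τ)ᶜ := by
  rw [← image_openers hτ hfix, card_image_of_injective _ τ.injective]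

theorem mem_openers_of_inversion (hτ : Involutive τ) (hfix : ∀ i, τ i ≠ i)
    (hmono : StrictMonoOn τ (openers τ)) {x y : α} (hxy : x < y) (hτyx : τ y < τ x) :
    x ∈ openers τ ∧ y ∉ openers τ := by
  by_cases hx : x ∈ openers τ <;> by_cases hy : y ∈ openers τ
  · exact absurd (hmono hx hy hxy) hτyx.not_gt
  · exact ⟨hx, hy⟩
  · have := (apply_lt_of_notMem_openers hfix hx).trans (hxy.trans (mem_openers.mp hy))
    exact absurd hτyx this.not_gt
  · have := hmono ((apply_mem_openers_iff hτ hfix).mpr hy)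
      ((apply_mem_openers_iff hτ hfix).mpr hx) hτyx
    rw [hτ, hτ] at this
    exact absurd hxy this.not_gt

theorem eq_of_openers_eq {σ : Equiv.Perm α} (hτ : Involutive τ) (hτfix : ∀ i, τ i ≠ i)
    (hτmono : StrictMonoOn τ (openers τ)) (hσ : Involutive σ) (hσfix : ∀ i, σ i ≠ i)
    (hσmono : StrictMonoOn σ (openers σ)) (h : openers τ = openers σ) : τ = σ := by
  have hagree : Set.EqOn τ σ (openers τ) :=
    hτmono.eqOn_of_image_eq (h ▸ hσmono)
      (by rw [image_openers hτ hτfix, h, image_openers hσ hσfix])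
  ext i
  by_cases hi : i ∈ openers τ
  · exact hagree hi
  · have hτi : τ (τ i) = σ (τ i) := hagree ((apply_mem_openers_iff hτ hτfix).mpr hi)
    rw [hτ] at hτi
    calc τ i = σ (σ (τ i)) := (hσ _).symm
      _ = σ i := by rw [← hτi]

end Openers

section Patterns

variable {n : ℕ} {τ : Equiv.Perm (Fin n)}

theorem av321_iff_av4321 (hτ : Involutive τ) (hfix : ∀ i, τ i ≠ i) : Av321 τ ↔ Av4321 τ := by
  constructor
  · rintro h ⟨i, j, k, -, hij, hjk, -, -, hkj, hji⟩
    exact h ⟨i, j, k, hij, hjk, hkj, hji⟩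
  · rintro h ⟨i, j, k, hij, hjk, hkj, hji⟩
    rcases (hfix j).lt_or_gt with hj | hj
    · exact h ⟨τ k, τ j, j, k, hkj, hj, hjk, hkj, by rwa [hτ], by rwa [hτ, hτ]⟩
    · exact h ⟨i, j, τ j, τ i, hij, hj, hji, by rwa [hτ, hτ], by rwa [hτ], hji⟩

theorem av321_iff_strictMonoOn_openers (hτ : Involutive τ) (hfix : ∀ i, τ i ≠ i) :
    Av321 τ ↔ StrictMonoOn τ (openers τ) := by
  constructor
  · intro h i hi j hj hij
    by_contra hle
    have hji : τ j < τ i := (τ.injective.ne hij.ne').lt_of_le (not_lt.mp hle)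
    have hj : j < τ j := mem_openers.mp hj
    exact h ⟨i, j, τ j, hij, hj, by rwa [hτ], hji⟩
  · rintro hmono ⟨i, j, k, hij, hjk, hkj, hji⟩
    exact (mem_openers_of_inversion hτ hfix hmono hij hji).2
      (mem_openers_of_inversion hτ hfix hmono hjk hkj).1

end Patterns

section Matching

variable {α : Type*} [LinearOrder α] [Fintype α] {s : Finset α}

def swapCompl (e : s ≃ ↥sᶜ) (a : α) : α :=
  if ha : a ∈ s then e ⟨a, ha⟩ else e.symm ⟨a, mem_compl.2 ha⟩

theorem swapCompl_of_mem (e : s ≃ ↥sᶜ) {a : α} (ha : a ∈ s) : swapCompl e a = e ⟨a, ha⟩ :=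
  dif_pos ha

theorem swapCompl_of_notMem (e : s ≃ ↥sᶜ) {a : α} (ha : a ∉ s) :
    swapCompl e a = e.symm ⟨a, mem_compl.2 ha⟩ :=
  dif_neg ha

theorem involutive_swapCompl (e : s ≃ ↥sᶜ) : Involutive (swapCompl e) := by
  intro a
  by_cases ha : a ∈ s
  · rw [swapCompl_of_mem e ha, swapCompl_of_notMem e (mem_compl.1 (e _).2)]
    simp
  · rw [swapCompl_of_notMem e ha, swapCompl_of_mem e (e.symm _).2]
    simp

theorem lt_swapCompl (e : s ≃o ↥sᶜ) (he : ∀ a : s, (a : α) < e a) {a : α} (ha : a ∈ s) :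
    a < swapCompl e.toEquiv a := by
  rw [swapCompl_of_mem _ ha]
  exact he ⟨a, ha⟩

theorem swapCompl_lt (e : s ≃o ↥sᶜ) (he : ∀ a : s, (a : α) < e a) {a : α} (ha : a ∉ s) :
    swapCompl e.toEquiv a < a := by
  rw [swapCompl_of_notMem _ ha]
  simpa using he (e.symm ⟨a, mem_compl.2 ha⟩)

theorem strictMonoOn_swapCompl (e : s ≃o ↥sᶜ) : StrictMonoOn (swapCompl e.toEquiv) s := by
  intro a ha b hb hab
  rw [swapCompl_of_mem _ ha, swapCompl_of_mem _ hb]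
  exact e.strictMono (show (⟨a, ha⟩ : s) < ⟨b, hb⟩ from hab)

end Matching

section Ballot

variable {n : ℕ} {s : Finset (Fin n)}

def IsBallot (s : Finset (Fin n)) : Prop :=
  #s = #sᶜ ∧ ∀ m : ℕ, #{i ∈ sᶜ | i.val < m} ≤ #{i ∈ s | i.val < m}

theorem isBallot_openers {τ : Equiv.Perm (Fin n)} (hτ : Involutive τ) (hfix : ∀ i, τ i ≠ i) :
    IsBallot (openers τ) := by
  refine ⟨card_openers_eq_card_compl hτ hfix,
    fun m => card_le_card_of_injOn τ ?_ τ.injective.injOn⟩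
  intro i hi
  simp only [coe_filter, Set.mem_ofPred_eq] at hi ⊢
  have hclose : i ∉ openers τ := mem_compl.mp hi.1
  exact ⟨(apply_mem_openers_iff hτ hfix).mpr hclose,
    (Fin.lt_def.mp (apply_lt_of_notMem_openers hfix hclose)).trans hi.2⟩

theorem IsBallot.orderEmbOfFin_lt (hs : IsBallot s) (j : Fin #s) :
    s.orderEmbOfFin rfl j < sᶜ.orderEmbOfFin hs.1.symm j := by
  set o := s.orderEmbOfFin rfl j
  set c := sᶜ.orderEmbOfFin hs.1.symm j
  have ho : o ∈ s := s.orderEmbOfFin_mem rfl j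
  have hc : c ∉ s := mem_compl.mp (sᶜ.orderEmbOfFin_mem hs.1.symm j)
  by_contra hle
  -- The initial segment ending at `c` then holds `j + 1` elements of `sᶜ` but at most `j` of `s`.
  have hco : c < o := (show c ≠ o from fun h => hc (h ▸ ho)).lt_of_le (not_lt.mp hle)
  have hcompl : (j : ℕ) + 1 ≤ #{i ∈ sᶜ | i.val < c.val + 1} := by
    rw [← card_filter_lt_orderEmbOfFin sᶜ hs.1.symm j,
      ← card_insert_of_notMem (show c ∉ {x ∈ sᶜ | x < c} by simp)]
    refine card_le_card fun x => ?_
    simp only [mem_insert, mem_filter, mem_compl]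
    rintro (rfl | ⟨hx, hxc⟩)
    · exact ⟨hc, Nat.lt_succ_self _⟩
    · exact ⟨hx, Nat.lt_succ_of_lt hxc⟩
  have hopen : #{i ∈ s | i.val < c.val + 1} ≤ j := by
    rw [← card_filter_lt_orderEmbOfFin s rfl j]
    refine card_le_card fun x => ?_
    simp only [mem_filter]
    exact fun ⟨hx, hxc⟩ => ⟨hx, lt_of_le_of_lt (Nat.lt_succ_iff.mp hxc) hco⟩
  have := hs.2 (c.val + 1)
  omega

theorem IsBallot.exists_perm (hs : IsBallot s) :
    ∃ τ : Equiv.Perm (Fin n), Involutive τ ∧ (∀ i, τ i ≠ i) ∧ Av321 τ ∧ openers τ = s := by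
  let e : s ≃o ↥sᶜ := (s.orderIsoOfFin rfl).symm.trans (sᶜ.orderIsoOfFin hs.1.symm)
  have he (a : s) : (a : Fin n) < e a := by
    have := hs.orderEmbOfFin_lt ((s.orderIsoOfFin rfl).symm a)
    rwa [← coe_orderIsoOfFin_apply, OrderIso.apply_symm_apply] at this
  have hinv := involutive_swapCompl e.toEquiv
  have hfix (i : Fin n) : swapCompl e.toEquiv i ≠ i := by
    by_cases hi : i ∈ s
    · exact (lt_swapCompl e he hi).ne'
    · exact (swapCompl_lt e he hi).ne
  have hopen : openers (hinv.toPerm _) = s := by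
    ext i
    rw [mem_openers, Involutive.coe_toPerm]
    exact ⟨fun h => by_contra fun hi => (swapCompl_lt e he hi).not_gt h, lt_swapCompl e he⟩
  refine ⟨hinv.toPerm _, hinv, hfix, ?_, hopen⟩
  rw [av321_iff_strictMonoOn_openers hinv hfix, hopen]
  exact strictMonoOn_swapCompl e

end Ballot

theorem bijective_openers (n : ℕ) :
    Bijective fun τ : {τ : Equiv.Perm (Fin n) // τ * τ = 1 ∧ (∀ i, τ i ≠ i) ∧ Av321 τ} =>
      (⟨openers τ.1, isBallot_openers (Equiv.Perm.mul_self_eq_one_iff_involutive.mp τ.2.1)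
        τ.2.2.1⟩ : {s : Finset (Fin n) // IsBallot s}) := by
  constructor
  · rintro ⟨τ, hτ, hτfix, hτav⟩ ⟨σ, hσ, hσfix, hσav⟩ h
    rw [Equiv.Perm.mul_self_eq_one_iff_involutive] at hτ hσ
    exact Subtype.ext <| eq_of_openers_eq
      hτ hτfix ((av321_iff_strictMonoOn_openers hτ hτfix).mp hτav)
      hσ hσfix ((av321_iff_strictMonoOn_openers hσ hσfix).mp hσav) (congrArg Subtype.val h)
  · rintro ⟨s, hs⟩
    obtain ⟨τ, hτ, hfix, hav, rfl⟩ := hs.exists_perm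
    exact ⟨⟨τ, Equiv.Perm.mul_self_eq_one_iff_involutive.mpr hτ, hfix, hav⟩, rfl⟩

section DyckWords

variable {n : ℕ}

def stepsOf (s : Finset (Fin n)) : List DyckStep :=
  List.ofFn fun i => if i ∈ s then U else D

theorem stepsOf_injective : Injective (stepsOf (n := n)) := by
  intro s t h
  ext i
  have := congrFun (List.ofFn_injective h) i
  by_cases hs : i ∈ s <;> by_cases ht : i ∈ t <;> simp_all

theorem length_stepsOf (s : Finset (Fin n)) : (stepsOf s).length = n := List.length_ofFn

theorem count_take_stepsOf_U (s : Finset (Fin n)) (m : ℕ) :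
    ((stepsOf s).take m).count U = #{i ∈ s | i.val < m} := by
  rw [stepsOf, List.count_take_ofFn]
  congr 1
  ext i
  by_cases hi : i ∈ s <;> simp [hi, and_comm]

theorem count_take_stepsOf_D (s : Finset (Fin n)) (m : ℕ) :
    ((stepsOf s).take m).count D = #{i ∈ sᶜ | i.val < m} := by
  rw [stepsOf, List.count_take_ofFn]
  congr 1
  ext i
  by_cases hi : i ∈ s <;> simp [hi, and_comm]

theorem isBallot_iff_stepsOf (s : Finset (Fin n)) :
    IsBallot s ↔ (stepsOf s).count U = (stepsOf s).count D ∧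
      ∀ m, ((stepsOf s).take m).count D ≤ ((stepsOf s).take m).count U := by
  have htake : (stepsOf s).take n = stepsOf s := List.take_of_length_le (length_stepsOf s).le
  have hcount (x : DyckStep) : (stepsOf s).count x = ((stepsOf s).take n).count x := by
    rw [htake]
  simp only [IsBallot, hcount, count_take_stepsOf_U, count_take_stepsOf_D, Fin.is_lt,
    filter_true]

theorem exists_stepsOf_eq {l : List DyckStep} (hl : l.length = n) :
    ∃ s : Finset (Fin n), stepsOf s = l := by
  subst hl
  refine ⟨({i | l[i] = U} : Finset (Fin l.length)),
    List.ext_getElem (length_stepsOf _) fun i _ _ => ?_⟩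
  rcases l[i].dichotomy with h | h <;> simp [stepsOf, h]

def IsBallot.toDyckWord {s : Finset (Fin n)} (hs : IsBallot s) : DyckWord where
  toList := stepsOf s
  count_U_eq_count_D := ((isBallot_iff_stepsOf s).mp hs).1
  count_D_le_count_U := ((isBallot_iff_stepsOf s).mp hs).2

theorem IsBallot.two_mul_semilength_toDyckWord {s : Finset (Fin n)} (hs : IsBallot s) :
    2 * hs.toDyckWord.semilength = n :=
  hs.toDyckWord.two_mul_semilength_eq_length.trans (length_stepsOf s)

end DyckWords

theorem bijective_toDyckWord (h : ℕ) :
    Bijective fun s : {s : Finset (Fin (2 * h)) // IsBallot s} =>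
      (⟨s.2.toDyckWord, by have := s.2.two_mul_semilength_toDyckWord; omega⟩ :
        {p : DyckWord // p.semilength = h}) := by
  constructor
  · rintro ⟨s, hs⟩ ⟨t, ht⟩ hst
    exact Subtype.ext (stepsOf_injective (congrArg (·.1.toList) hst))
  · rintro ⟨p, hp⟩
    obtain ⟨s, hs⟩ := exists_stepsOf_eq (p.two_mul_semilength_eq_length.symm.trans (by rw [hp]))
    have hballot : IsBallot s := by
      rw [isBallot_iff_stepsOf, hs]
      exact ⟨p.count_U_eq_count_D, p.count_D_le_count_U⟩
    exact ⟨⟨s, hballot⟩, Subtype.ext (DyckWord.ext hs)⟩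

theorem fpf_involutions_avoiding_4321 (h : ℕ) :
    Nat.card {τ : Equiv.Perm (Fin (2 * h)) //
        τ * τ = 1 ∧ (∀ i, τ i ≠ i) ∧ Av4321 τ} =
      Nat.choose (2 * h) h / (h + 1) ∧
    ∀ τ : Equiv.Perm (Fin (2 * h)), τ * τ = 1 → (∀ i, τ i ≠ i) →
      (Av321 τ ↔ Av4321 τ) := by
  have hpattern : ∀ τ : Equiv.Perm (Fin (2 * h)), τ * τ = 1 → (∀ i, τ i ≠ i) →
      (Av321 τ ↔ Av4321 τ) := fun τ hτ hfix =>
    av321_iff_av4321 (Equiv.Perm.mul_self_eq_one_iff_involutive.mp hτ) hfix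
  refine ⟨?_, hpattern⟩
  calc Nat.card {τ : Equiv.Perm (Fin (2 * h)) // τ * τ = 1 ∧ (∀ i, τ i ≠ i) ∧ Av4321 τ}
      = Nat.card {τ : Equiv.Perm (Fin (2 * h)) // τ * τ = 1 ∧ (∀ i, τ i ≠ i) ∧ Av321 τ} :=
        Nat.card_congr <| Equiv.subtypeEquivRight fun τ =>
          and_congr_right fun hτ => and_congr_right fun hfix => (hpattern τ hτ hfix).symm
    _ = Nat.card {s : Finset (Fin (2 * h)) // IsBallot s} :=
        Nat.card_eq_of_bijective _ (bijective_openers _)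
    _ = Nat.card {p : DyckWord // p.semilength = h} :=
        Nat.card_eq_of_bijective _ (bijective_toDyckWord h)
    _ = catalan h := by
        rw [Nat.card_eq_fintype_card, DyckWord.card_dyckWord_semilength_eq_catalan]
    _ = Nat.choose (2 * h) h / (h + 1) := catalan_eq_centralBinom_div h
end

section
/- The number of fixed-point-free involutions of {1,...,2h} avoiding both 3412 and 123 equals 1 + C(h,2). -/
def Av3412 {n : ℕ} (σ : Equiv.Perm (Fin n)) : Prop :=
  ¬ ∃ i j k l : Fin n, i < j ∧ j < k ∧ k < l ∧ σ k < σ l ∧ σ l < σ i ∧ σ i < σ j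

def Av123 {n : ℕ} (σ : Equiv.Perm (Fin n)) : Prop :=
  ¬ ∃ i j k : Fin n, i < j ∧ j < k ∧ σ i < σ j ∧ σ j < σ k


def g (h x y i : ℕ) : ℕ :=
  if x ≤ i ∧ i < 2*y - x then 2*y - 1 - i
  else if 2*y - x ≤ i ∧ i < 2*h - x then 2*(h+y) - 2*x - 1 - i
  else 2*h - 1 - i

lemma g_lt (h x y i : ℕ) (hy : y ≤ h) (hi : i < 2*h) : g h x y i < 2*h := by
  unfold g; split_ifs <;> omega

lemma g_invol (h x y i : ℕ) (hxy : x ≤ y) (hy : y ≤ h) (hi : i < 2*h) :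
    g h x y (g h x y i) = i := by
  unfold g; split_ifs <;> omega

def tperm (h x y : ℕ) (hxy : x ≤ y) (hy : y ≤ h) : Equiv.Perm (Fin (2*h)) :=
  Function.Involutive.toPerm
    (fun i => ⟨g h x y i.val, g_lt h x y i.val hy i.isLt⟩)
    (fun i => Fin.ext (g_invol h x y i.val hxy hy i.isLt))

lemma tperm_apply (h x y : ℕ) (hxy : x ≤ y) (hy : y ≤ h) (i : Fin (2*h)) :
    ((tperm h x y hxy hy) i : ℕ) = g h x y i.val := rfl

lemma tperm_mul_self (h x y : ℕ) (hxy : x ≤ y) (hy : y ≤ h) :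
    tperm h x y hxy hy * tperm h x y hxy hy = 1 := by
  ext i
  have : ((tperm h x y hxy hy) ((tperm h x y hxy hy) i)).val = i.val := by
    rw [tperm_apply, tperm_apply]
    exact g_invol h x y i.val hxy hy i.isLt
  simpa [Equiv.Perm.mul_apply] using this

lemma tperm_fpf (h x y : ℕ) (hxy : x ≤ y) (hy : y ≤ h) (i : Fin (2*h)) :
    tperm h x y hxy hy i ≠ i := by
  intro he
  have hv : g h x y i.val = i.val := by
    rw [← tperm_apply h x y hxy hy i, he]
  have hi := i.isLt
  unfold g at hv; split_ifs at hv <;> omega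

lemma tperm_av123 (h x y : ℕ) (hxy : x ≤ y) (hy : y ≤ h) :
    Av123 (tperm h x y hxy hy) := by
  rintro ⟨i, j, k, hij, hjk, h1, h2⟩
  rw [Fin.lt_def] at hij hjk h1 h2
  rw [tperm_apply, tperm_apply] at h1
  rw [tperm_apply, tperm_apply] at h2
  have hi := i.isLt; have hj := j.isLt; have hk := k.isLt
  unfold g at h1 h2
  split_ifs at h1 h2 <;> omega

lemma tperm_av3412 (h x y : ℕ) (hxy : x ≤ y) (hy : y ≤ h) :
    Av3412 (tperm h x y hxy hy) := by
  rintro ⟨i, j, k, l, hij, hjk, hkl, h1, h2, h3⟩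
  rw [Fin.lt_def] at hij hjk hkl h1 h2 h3
  rw [tperm_apply, tperm_apply] at h1
  rw [tperm_apply, tperm_apply] at h2
  rw [tperm_apply, tperm_apply] at h3
  have hi := i.isLt; have hj := j.isLt; have hk := k.isLt; have hl := l.isLt
  unfold g at h1 h2 h3
  split_ifs at h1 h2 h3 <;> omega

lemma rev_of_decr (T : ℕ → ℕ) (a b : ℕ)
    (hcl : ∀ i, a ≤ i → i ≤ b → a ≤ T i ∧ T i ≤ b)
    (hdec : ∀ i j, a ≤ i → i < j → j ≤ b → T j < T i) :
    ∀ i, a ≤ i → i ≤ b → T i = a + b - i := by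
  have L1 : ∀ d, a + d ≤ b → T (a+d) ≤ b - d := by
    intro d
    induction d with
    | zero => intro hd; simpa using (hcl a le_rfl (by omega)).2
    | succ n ih =>
      intro hd
      have h1 : T (a+(n+1)) < T (a+n) := by
        have e : a+(n+1) = a+n+1 := by omega
        rw [e]; exact hdec (a+n) (a+n+1) (by omega) (by omega) (by omega)
      have h2 := ih (by omega)
      omega
  have L2 : ∀ d, a + d ≤ b → a + d ≤ T (b - d) := by
    intro d
    induction d with
    | zero => intro hd; simpa using (hcl b (by omega) le_rfl).1
    | succ n ih =>
      intro hd
      have h1 : T (b-n) < T (b-(n+1)) := hdec (b-(n+1)) (b-n) (by omega) (by omega) (by omega)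
      have h2 := ih (by omega)
      omega
  intro i h1 h2
  have e1 : a + (i - a) = i := by omega
  have e2 : b - (b - i) = i := by omega
  have t1 := L1 (i - a) (by omega)
  have t2 := L2 (b - i) (by omega)
  rw [e1] at t1; rw [e2] at t2
  omega

lemma main_nat (h : ℕ) (T : ℕ → ℕ)
    (hT1 : ∀ n, n < 2*h → T n < 2*h)
    (hT2 : ∀ n, n < 2*h → T (T n) = n)
    (hT3 : ∀ n, n < 2*h → T n ≠ n)
    (hT4 : ∀ i j k, i < j → j < k → k < 2*h → T i < T j → T j < T k → False)
    (hT5 : ∀ i j k l, i < j → j < k → k < l → l < 2*h →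
        T k < T l → T l < T i → T i < T j → False) :
    (∀ n, n < 2*h → T n = 2*h-1-n) ∨
    ∃ x y, x < y ∧ y < h ∧ ∀ n, n < 2*h → T n = g h x y n := by
  by_cases hrev : ∀ n, n < 2*h → T n = 2*h-1-n
  · exact Or.inl hrev
  right
  push_neg at hrev
  have hP : ∃ n, n < 2*h ∧ T n ≠ 2*h-1-n := hrev
  classical
  obtain ⟨x, ⟨hx2h, hxne⟩, hxmin⟩ :
      ∃ x, (x < 2*h ∧ T x ≠ 2*h-1-x) ∧ ∀ m, m < x → ¬(m < 2*h ∧ T m ≠ 2*h-1-m) :=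
    ⟨Nat.find hP, Nat.find_spec hP, fun m hm => Nat.find_min hP hm⟩
  have shell_lo : ∀ m, m < x → T m = 2*h-1-m := by
    intro m hm
    have h1 := hxmin m hm
    push_neg at h1
    exact h1 (by omega)
  have hxh : x < h := by
    by_contra hcon
    push_neg at hcon
    have hx' : 2*h-1-x < x := by omega
    have h1 : T (2*h-1-x) = x := by
      rw [shell_lo _ hx']; omega
    have h2 := hT2 (2*h-1-x) (by omega)
    rw [h1] at h2
    exact hxne h2
  have shell_hi : ∀ m, 2*h-x ≤ m → m < 2*h → T m = 2*h-1-m := by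
    intro m hm1 hm2
    have h1 : T (2*h-1-m) = m := by
      rw [shell_lo _ (by omega)]; omega
    have h2 := hT2 (2*h-1-m) (by omega)
    rw [h1] at h2
    omega
  have mid : ∀ m, x ≤ m → m < 2*h-x → x ≤ T m ∧ T m < 2*h-x := by
    intro m hm1 hm2
    have hm2h : m < 2*h := by omega
    have hTm2h := hT1 m hm2h
    constructor
    · by_contra hcon
      push_neg at hcon
      have h2 := hT2 m hm2h
      rw [shell_lo _ hcon] at h2
      omega
    · by_contra hcon
      push_neg at hcon
      have h2 := hT2 m hm2h
      rw [shell_hi _ hcon hTm2h] at h2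
      omega
  obtain ⟨c, hc⟩ : ∃ c, c = T x := ⟨_, rfl⟩
  have hmidx := mid x le_rfl (by omega)
  rw [← hc] at hmidx hxne
  have hc1 : x < c := by
    have := hT3 x hx2h
    rw [← hc] at this
    omega
  have hc2 : c < 2*h-1-x := by omega
  have hc2h : c < 2*h := by omega
  have hTc : T c = x := by
    have := hT2 x hx2h
    rw [← hc] at this
    exact this
  have claimA : ∀ m, x < m → m < c → T m < c := by
    intro m h1 h2
    by_contra hcon
    push_neg at hcon
    have hTTm := hT2 m (by omega)
    have hne : T m ≠ c := by
      intro he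
      rw [he, hTc] at hTTm
      omega
    have hgt : c < T m := by omega
    refine hT5 x m c (T m) h1 h2 hgt (hT1 m (by omega)) ?_ ?_ ?_
    · rw [hTc]; omega
    · rw [hTTm, ← hc]; omega
    · rw [← hc]; omega
  have blockcl : ∀ m, x ≤ m → m ≤ c → x ≤ T m ∧ T m ≤ c := by
    intro m h1 h2
    rcases eq_or_lt_of_le h1 with he | hlt
    · rw [← he, ← hc]; omega
    rcases eq_or_lt_of_le h2 with he | hlt2
    · rw [he, hTc]; omega
    have hA := mid m h1 (by omega)
    have hB := claimA m hlt hlt2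
    omega
  have kfact : ∀ k, c < k → k < 2*h-x → c < T k := by
    intro k h1 h2
    by_contra hcon
    push_neg at hcon
    have hm := mid k (by omega) h2
    have hB := blockcl (T k) hm.1 hcon
    rw [hT2 k (by omega)] at hB
    omega
  have hinj : ∀ i j, i < 2*h → j < 2*h → T i = T j → i = j := by
    intro i j hi hj he
    have e1 := hT2 i hi
    have e2 := hT2 j hj
    rw [he] at e1; omega
  have blockdec : ∀ i j, x ≤ i → i < j → j ≤ c → T j < T i := by
    intro i j h1 h2 h3
    by_contra hcon
    push_neg at hcon
    have hne : T i ≠ T j := fun he => by have := hinj i j (by omega) (by omega) he; omega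
    have hlt : T i < T j := by omega
    have hk := kfact (c+1) (by omega) (by omega)
    have hTj := blockcl j (by omega) h3
    exact hT4 i j (c+1) h2 (by omega) (by omega) hlt (by omega)
  have blockrev : ∀ m, x ≤ m → m ≤ c → T m = x + c - m :=
    rev_of_decr T x c blockcl blockdec
  have hodd : (x + c) % 2 = 1 := by
    by_contra hcon
    have hm1 : x ≤ (x+c)/2 := by omega
    have hm2 : (x+c)/2 ≤ c := by omega
    have hB := blockrev ((x+c)/2) hm1 hm2
    have := hT3 ((x+c)/2) (by omega)
    omega
  have updec : ∀ i j, c < i → i < j → j < 2*h-x → T j < T i := by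
    intro i j h1 h2 h3
    by_contra hcon
    push_neg at hcon
    have hne : T i ≠ T j := fun he => by have := hinj i j (by omega) (by omega) he; omega
    have hlt : T i < T j := by omega
    have hki := kfact i h1 (by omega)
    refine hT4 x i j (by omega) h2 (by omega) ?_ hlt
    rw [← hc]; omega
  have upcl : ∀ m, c+1 ≤ m → m ≤ 2*h-x-1 → c+1 ≤ T m ∧ T m ≤ 2*h-x-1 := by
    intro m h1 h2
    have hA := mid m (by omega) (by omega)
    have hB := kfact m (by omega) (by omega)
    omega
  have uprev : ∀ m, c+1 ≤ m → m ≤ 2*h-x-1 → T m = (c+1) + (2*h-x-1) - m :=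
    rev_of_decr T (c+1) (2*h-x-1) upcl
      (fun i j h1 h2 h3 => updec i j (by omega) h2 (by omega))
  refine ⟨x, (x+c+1)/2, by omega, by omega, ?_⟩
  intro n hn
  have hcy : c = 2*((x+c+1)/2) - 1 - x := by omega
  unfold g
  split_ifs with h1 h2
  · have := blockrev n h1.1 (by omega)
    omega
  · have := uprev n (by omega) (by omega)
    omega
  · rcases (by omega : n < x ∨ 2*h-x ≤ n) with hc' | hc'
    · rw [shell_lo n hc']
    · rw [shell_hi n hc' hn]

lemma char (h : ℕ) (τ : Equiv.Perm (Fin (2*h)))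
    (hinv : τ * τ = 1) (hfpf : ∀ i, τ i ≠ i) (h34 : Av3412 τ) (h12 : Av123 τ) :
    (∀ i : Fin (2*h), (τ i : ℕ) = 2*h - 1 - i.val) ∨
    ∃ x y, x < y ∧ y < h ∧ ∀ i : Fin (2*h), (τ i : ℕ) = g h x y i.val := by
  classical
  have hinv' : ∀ i, τ (τ i) = i := by
    intro i
    rw [← Equiv.Perm.mul_apply, hinv, Equiv.Perm.one_apply]
  set T : ℕ → ℕ := fun n => if hn : n < 2*h then (τ ⟨n, hn⟩ : ℕ) else 0 with hTdef
  have Tval : ∀ (i : Fin (2*h)), T i.val = (τ i : ℕ) := by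
    intro i
    simp only [hTdef, i.isLt, dif_pos, Fin.eta]
  have hT1 : ∀ n, n < 2*h → T n < 2*h := by
    intro n hn
    rw [show T n = (τ ⟨n, hn⟩ : ℕ) from Tval ⟨n, hn⟩]
    exact (τ ⟨n, hn⟩).isLt
  have hT2 : ∀ n, n < 2*h → T (T n) = n := by
    intro n hn
    calc T (T n) = T ((τ ⟨n, hn⟩ : ℕ)) := by rw [Tval ⟨n, hn⟩]
    _ = (τ (τ ⟨n, hn⟩) : ℕ) := Tval _
    _ = n := by rw [hinv']
  have hT3 : ∀ n, n < 2*h → T n ≠ n := by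
    intro n hn he
    rw [Tval ⟨n, hn⟩] at he
    exact hfpf ⟨n, hn⟩ (Fin.ext he)
  have hT4 : ∀ i j k, i < j → j < k → k < 2*h → T i < T j → T j < T k → False := by
    intro i j k hij hjk hk hA hB
    have hi : i < 2*h := by omega
    have hj : j < 2*h := by omega
    rw [Tval ⟨i, hi⟩, Tval ⟨j, hj⟩] at hA
    rw [Tval ⟨j, hj⟩, Tval ⟨k, hk⟩] at hB
    exact h12 ⟨⟨i, hi⟩, ⟨j, hj⟩, ⟨k, hk⟩, hij, hjk, hA, hB⟩
  have hT5 : ∀ i j k l, i < j → j < k → k < l → l < 2*h →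
      T k < T l → T l < T i → T i < T j → False := by
    intro i j k l hij hjk hkl hl hA hB hC
    have hi : i < 2*h := by omega
    have hj : j < 2*h := by omega
    have hk : k < 2*h := by omega
    rw [Tval ⟨k, hk⟩, Tval ⟨l, hl⟩] at hA
    rw [Tval ⟨l, hl⟩, Tval ⟨i, hi⟩] at hB
    rw [Tval ⟨i, hi⟩, Tval ⟨j, hj⟩] at hC
    exact h34 ⟨⟨i, hi⟩, ⟨j, hj⟩, ⟨k, hk⟩, ⟨l, hl⟩, hij, hjk, hkl, hA, hB, hC⟩
  rcases main_nat h T hT1 hT2 hT3 hT4 hT5 with hc | ⟨x, y, hxy, hyh, hc⟩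
  · left
    intro i
    rw [← Tval i]
    exact hc i.val i.isLt
  · right
    refine ⟨x, y, hxy, hyh, fun i => ?_⟩
    rw [← Tval i]
    exact hc i.val i.isLt


theorem card_fpf_involutions_avoiding_3412_123 (h : ℕ) :
    Nat.card {τ : Equiv.Perm (Fin (2 * h)) //
        τ * τ = 1 ∧ (∀ i, τ i ≠ i) ∧ Av3412 τ ∧ Av123 τ} =
      1 + Nat.choose h 2 := by
  classical
  have mem : ∀ (x y : ℕ) (hxy : x ≤ y) (hy : y ≤ h),
      tperm h x y hxy hy * tperm h x y hxy hy = 1 ∧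
      (∀ i, tperm h x y hxy hy i ≠ i) ∧
      Av3412 (tperm h x y hxy hy) ∧ Av123 (tperm h x y hxy hy) :=
    fun x y hxy hy => ⟨tperm_mul_self h x y hxy hy, tperm_fpf h x y hxy hy,
      tperm_av3412 h x y hxy hy, tperm_av123 h x y hxy hy⟩
  let F : Option ((y : Fin h) × Fin y.val) → {τ : Equiv.Perm (Fin (2 * h)) //
        τ * τ = 1 ∧ (∀ i, τ i ≠ i) ∧ Av3412 τ ∧ Av123 τ} := fun d =>
    match d with
    | none => ⟨tperm h 0 0 le_rfl (Nat.zero_le h), mem 0 0 le_rfl (Nat.zero_le h)⟩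
    | some p => ⟨tperm h p.2.val p.1.val (le_of_lt p.2.isLt) (le_of_lt p.1.isLt),
        mem _ _ _ _⟩
  have hbij : Function.Bijective F := by
    constructor
    · intro a b hab
      have hvals : ∀ i : Fin (2*h), ((F a).val i : ℕ) = ((F b).val i : ℕ) := by
        intro i
        rw [Subtype.ext_iff] at hab
        rw [hab]
      rcases a with _ | ⟨⟨yv, hyv⟩, ⟨xv, hxv⟩⟩ <;> rcases b with _ | ⟨⟨yv', hyv'⟩, ⟨xv', hxv'⟩⟩
      · rfl
      · exfalso
        have hxv'2 : xv' < 2*h := by simp at hxv'; omega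
        have e : g h 0 0 xv' = g h xv' yv' xv' := hvals ⟨xv', hxv'2⟩
        simp only [Fin.val_mk] at hxv'
        unfold g at e
        split_ifs at e <;> omega
      · exfalso
        have hxv2 : xv < 2*h := by simp at hxv; omega
        have e : g h xv yv xv = g h 0 0 xv := hvals ⟨xv, hxv2⟩
        simp only [Fin.val_mk] at hxv
        unfold g at e
        split_ifs at e <;> omega
      · simp only [Fin.val_mk] at hxv hxv'
        rcases lt_trichotomy xv xv' with hlt | heq | hgt
        · exfalso
          have e : g h xv yv xv = g h xv' yv' xv := hvals ⟨xv, by omega⟩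
          unfold g at e
          split_ifs at e <;> omega
        · have hy : yv = yv' := by
            have e : g h xv yv xv = g h xv' yv' xv := hvals ⟨xv, by omega⟩
            unfold g at e
            split_ifs at e <;> omega
          subst hy; subst heq; rfl
        · exfalso
          have e : g h xv yv xv' = g h xv' yv' xv' := hvals ⟨xv', by omega⟩
          unfold g at e
          split_ifs at e <;> omega
    · rintro ⟨τ, h1, h2, h3, h4⟩
      rcases char h τ h1 h2 h3 h4 with hcc | ⟨x, y, hxy, hyh, hcc⟩
      · refine ⟨none, Subtype.ext (Equiv.ext fun i => Fin.ext ?_)⟩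
        show g h 0 0 i.val = (τ i : ℕ)
        rw [hcc i]
        have hi := i.isLt
        unfold g
        split_ifs <;> omega
      · refine ⟨some ⟨⟨y, hyh⟩, ⟨x, hxy⟩⟩, Subtype.ext (Equiv.ext fun i => Fin.ext ?_)⟩
        show g h x y i.val = (τ i : ℕ)
        rw [hcc i]
  rw [Nat.card_congr (Equiv.ofBijective F hbij).symm, Nat.card_eq_fintype_card,
    Fintype.card_option, Fintype.card_sigma]
  simp only [Fintype.card_fin]
  rw [Fin.sum_univ_eq_sum_range (fun i => i) h]
  have hs := Finset.sum_range_id_mul_two h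
  have hc2 : Nat.choose h 2 = h * (h - 1) / 2 := Nat.choose_two_right h
  omega
end

section
/- For h ≥ 1, the number of fixed-point-free involutions of {1,...,2h} avoiding 312 equals 2^{h−1}. -/
def Av312 {n : ℕ} (σ : Equiv.Perm (Fin n)) : Prop :=
  ¬ ∃ i j k : Fin n, i < j ∧ j < k ∧ σ j < σ k ∧ σ k < σ i

namespace Av312Aux

/-- A strictly monotone self-map of `Fin m` satisfies `x ≤ f x`. -/
lemma sm_le {m : ℕ} {f : Fin m → Fin m} (hf : StrictMono f) :
    ∀ x : Fin m, (x : ℕ) ≤ (f x : ℕ) := by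
  have key : ∀ k, ∀ x : Fin m, (x : ℕ) ≤ k → (x : ℕ) ≤ (f x : ℕ) := by
    intro k
    induction k with
    | zero => intro x hx; omega
    | succ k ih =>
      intro x hx
      rcases Nat.lt_or_ge (x : ℕ) (k + 1) with hlt | hge
      · exact ih x (by omega)
      · have hk : k < m := lt_of_lt_of_le (by omega) (le_of_lt x.isLt)
        have hy : (⟨k, hk⟩ : Fin m) < x := by rw [Fin.lt_def]; simp; omega
        have h1 := ih ⟨k, hk⟩ le_rfl
        have h2 := hf hy
        rw [Fin.lt_def] at h2
        simp at h1
        omega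
  exact fun x => key (x : ℕ) x le_rfl

/-- A strictly monotone self-map of `Fin m` is the identity. -/
lemma sm_id {m : ℕ} {f : Fin m → Fin m} (hf : StrictMono f) (x : Fin m) : f x = x := by
  have h1 := sm_le hf x
  have hg : StrictMono (fun y : Fin m => (f y.rev).rev) := by
    intro a b hab
    have hrev : b.rev < a.rev := by
      rw [Fin.lt_def, Fin.val_rev, Fin.val_rev]
      rw [Fin.lt_def] at hab
      have := a.isLt; have := b.isLt
      omega
    have h2 := hf hrev
    rw [Fin.lt_def] at h2 ⊢
    rw [Fin.val_rev, Fin.val_rev]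
    have := (f b.rev).isLt; have := (f a.rev).isLt
    omega
  have h2 := sm_le hg x.rev
  simp only [Fin.rev_rev] at h2
  rw [Fin.val_rev, Fin.val_rev] at h2
  have := (f x).isLt; have := x.isLt
  exact Fin.ext (by omega)

/-- `c` is a "cut point": the prefix `[0, c)` is mapped into itself. -/
def Closed {n : ℕ} (τ : Equiv.Perm (Fin n)) (c : ℕ) : Prop :=
  ∀ y : Fin n, (y : ℕ) < c → (τ y : ℕ) < c

section Struct

variable {n : ℕ} {τ : Equiv.Perm (Fin n)}

lemma tt (hinv : τ * τ = 1) (x : Fin n) : τ (τ x) = x := by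
  rw [← Equiv.Perm.mul_apply, hinv, Equiv.Perm.one_apply]

lemma suffix (hinv : τ * τ = 1) {c : ℕ} (hc : Closed τ c) (y : Fin n)
    (hy : c ≤ (y : ℕ)) : c ≤ (τ y : ℕ) := by
  by_contra hlt
  push_neg at hlt
  have h := hc (τ y) hlt
  rw [tt hinv] at h
  omega

lemma no_mid {c : ℕ} (hcn : c < n) {b : ℕ} (hb : Closed τ b) (hcb : c < b) :
    (τ ⟨c, hcn⟩ : ℕ) < b := hb ⟨c, hcn⟩ hcb

/-- Main structure lemma: starting at a cut point `c`, the permutation reverses the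
block `[c, τ c]`, `τ c + 1` is a cut point, and the block has even length. -/
lemma block (hinv : τ * τ = 1) (hfpf : ∀ i, τ i ≠ i)
    (hav : ¬ ∃ i j k : Fin n, i < j ∧ j < k ∧ τ j < τ k ∧ τ k < τ i)
    {c : ℕ} (hc : Closed τ c) (hcn : c < n) :
    c < (τ ⟨c, hcn⟩ : ℕ) ∧
    (∀ p : Fin n, c ≤ (p : ℕ) → (p : ℕ) ≤ (τ ⟨c, hcn⟩ : ℕ) →
      (τ p : ℕ) + (p : ℕ) = c + (τ ⟨c, hcn⟩ : ℕ)) ∧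
    Closed τ ((τ ⟨c, hcn⟩ : ℕ) + 1) ∧ (c + (τ ⟨c, hcn⟩ : ℕ)) % 2 = 1 := by
  set cc : Fin n := ⟨c, hcn⟩ with hcc
  have hccv : (cc : ℕ) = c := rfl
  set t : ℕ := (τ cc : ℕ) with ht
  have htn : t < n := (τ cc).isLt
  have hct : c < t := by
    have h1 : c ≤ t := suffix hinv hc cc le_rfl
    have h2 : (τ cc : ℕ) ≠ c := fun he => hfpf cc (Fin.ext (by omega))
    omega
  have htc : τ ⟨t, htn⟩ = cc := by
    have he : τ cc = ⟨t, htn⟩ := Fin.ext rfl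
    rw [← he, tt hinv]
  have htcv : (τ ⟨t, htn⟩ : ℕ) = c := by rw [htc]
  have htv : ((⟨t, htn⟩ : Fin n) : ℕ) = t := rfl
  have star : ∀ j k : Fin n, c < (j : ℕ) → (j : ℕ) < (k : ℕ) → (τ k : ℕ) < t →
      (τ k : ℕ) < (τ j : ℕ) := by
    intro j k hj hjk hk
    by_contra hle
    push_neg at hle
    have hne : (τ j : ℕ) ≠ (τ k : ℕ) := by
      intro he
      have := τ.injective (Fin.ext he : τ j = τ k)
      omega
    have hlt : (τ j : ℕ) < (τ k : ℕ) := by omega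
    exact hav ⟨cc, j, k, by rwa [Fin.lt_def], by rwa [Fin.lt_def],
      by rwa [Fin.lt_def], by rw [Fin.lt_def]; exact hk⟩
  have claim1 : ∀ v : Fin n, c < (v : ℕ) → (v : ℕ) < t →
      c < (τ v : ℕ) ∧ (τ v : ℕ) < t := by
    intro v hv1 hv2
    have hge : c ≤ (τ v : ℕ) := suffix hinv hc v (by omega)
    have hnec : (τ v : ℕ) ≠ c := by
      intro he
      have h1 : τ v = cc := Fin.ext he
      have h2 : v = τ cc := by rw [← h1, tt hinv]
      have : (v : ℕ) = t := by rw [h2]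
      omega
    have hlt : (τ v : ℕ) < t := by
      by_contra hge2
      push_neg at hge2
      have hnet : (τ v : ℕ) ≠ t := by
        intro he
        have h1 : τ v = τ cc := Fin.ext he
        have := τ.injective h1
        have : (v : ℕ) = c := by rw [this]
        omega
      have hgt : t < (τ v : ℕ) := by omega
      have hs := star ⟨t, htn⟩ (τ v) (by omega) (by omega)
        (by rw [tt hinv]; omega)
      have hvv : (τ (τ v) : ℕ) = (v : ℕ) := by rw [tt hinv]
      omega
    exact ⟨by omega, hlt⟩
  have claim2 : ∀ j k : Fin n, c < (j : ℕ) → (j : ℕ) < (k : ℕ) → (k : ℕ) < t →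
      (τ k : ℕ) < (τ j : ℕ) := by
    intro j k hj hjk hk
    have := claim1 k (by omega) hk
    exact star j k hj hjk this.2
  have A2 : ∀ p : Fin n, c ≤ (p : ℕ) → (p : ℕ) ≤ t →
      (τ p : ℕ) + (p : ℕ) = c + t := by
    intro p hp1 hp2
    rcases eq_or_lt_of_le hp1 with he | hgt1
    · have : p = cc := Fin.ext (by omega)
      rw [this]; omega
    rcases eq_or_lt_of_le hp2 with he | hlt2
    · have hp : p = ⟨t, htn⟩ := Fin.ext (by omega)
      rw [hp]
      omega
    -- interior
    set m := t - c - 1 with hm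
    have hpos : ∀ x : Fin m, c + 1 + (x : ℕ) < n := by
      intro x; have := x.isLt; omega
    have hval : ∀ x : Fin m, c < (τ ⟨c + 1 + (x : ℕ), hpos x⟩ : ℕ) ∧
        (τ ⟨c + 1 + (x : ℕ), hpos x⟩ : ℕ) < t := by
      intro x
      have hxm := x.isLt
      have hv : ((⟨c + 1 + (x : ℕ), hpos x⟩ : Fin n) : ℕ) = c + 1 + (x : ℕ) := rfl
      exact claim1 _ (by omega) (by omega)
    set f : Fin m → Fin m := fun x =>
      ⟨t - 1 - (τ ⟨c + 1 + (x : ℕ), hpos x⟩ : ℕ), by have := (hval x).1; omega⟩ with hf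
    have hsm : StrictMono f := by
      intro a b hab
      rw [Fin.lt_def] at hab ⊢
      simp only [hf]
      have h1 := hval a
      have h2 := hval b
      have hva : ((⟨c + 1 + (a : ℕ), hpos a⟩ : Fin n) : ℕ) = c + 1 + (a : ℕ) := rfl
      have hvb : ((⟨c + 1 + (b : ℕ), hpos b⟩ : Fin n) : ℕ) = c + 1 + (b : ℕ) := rfl
      have hbm := b.isLt
      have hd := claim2 ⟨c + 1 + (a : ℕ), hpos a⟩ ⟨c + 1 + (b : ℕ), hpos b⟩
        (by omega) (by omega) (by omega)
      omega
    have hx : (p : ℕ) - c - 1 < m := by omega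
    have hid := sm_id hsm ⟨(p : ℕ) - c - 1, hx⟩
    have hpe : (⟨c + 1 + ((⟨(p : ℕ) - c - 1, hx⟩ : Fin m) : ℕ), hpos _⟩ : Fin n) = p :=
      Fin.ext (by show c + 1 + ((p : ℕ) - c - 1) = (p : ℕ); omega)
    have hv := hval ⟨(p : ℕ) - c - 1, hx⟩
    rw [hpe] at hv
    have hval2 : (f ⟨(p : ℕ) - c - 1, hx⟩ : ℕ) = (p : ℕ) - c - 1 := by rw [hid]
    simp only [hf] at hval2
    rw [hpe] at hval2  -- hope the motive works
    omega
  refine ⟨hct, A2, ?_, ?_⟩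
  · intro y hy
    rcases Nat.lt_or_ge (y : ℕ) c with h | h
    · have := hc y h; omega
    · have := A2 y h (by omega); omega
  · by_contra hpar
    have he : (c + t) % 2 = 0 := by omega
    set s := (c + t) / 2 with hs
    have hsn : s < n := by omega
    have hsv : ((⟨s, hsn⟩ : Fin n) : ℕ) = s := rfl
    have := A2 ⟨s, hsn⟩ (by omega) (by omega)
    exact hfpf ⟨s, hsn⟩ (Fin.ext (by omega))

lemma closed_zero : Closed τ 0 := fun y hy => absurd hy (by omega)

lemma closed_n : Closed τ n := fun y _ => (τ y).isLt

/-- Every cut point of a 312-avoiding FPF involution is even. -/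
lemma evenClosed (hinv : τ * τ = 1) (hfpf : ∀ i, τ i ≠ i)
    (hav : ¬ ∃ i j k : Fin n, i < j ∧ j < k ∧ τ j < τ k ∧ τ k < τ i) :
    ∀ b, b ≤ n → Closed τ b → b % 2 = 0 := by
  intro b
  induction b using Nat.strong_induction_on with
  | _ b ih =>
  intro hbn hb
  rcases Nat.eq_zero_or_pos b with rfl | hb0
  · rfl
  classical
  set S := (Finset.range b).filter (fun c => Closed τ c) with hS
  have h0S : (0 : ℕ) ∈ S := by
    rw [hS, Finset.mem_filter, Finset.mem_range]
    exact ⟨hb0, closed_zero⟩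
  have hne : S.Nonempty := ⟨0, h0S⟩
  set c := S.max' hne with hcdef
  have hcS := S.max'_mem hne
  have hcb : c < b := Finset.mem_range.mp (Finset.mem_filter.mp hcS).1
  have hcC : Closed τ c := (Finset.mem_filter.mp hcS).2
  have hcn : c < n := lt_of_lt_of_le hcb hbn
  obtain ⟨h1, h2, h3, h4⟩ := block hinv hfpf hav hcC hcn
  set t := (τ (⟨c, hcn⟩ : Fin n) : ℕ) with htd
  have hbt : t < b := no_mid hcn hb hcb
  have hbeq : b = t + 1 := by
    by_contra hne2
    have ht1 : t + 1 ∈ S := by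
      rw [hS, Finset.mem_filter, Finset.mem_range]
      exact ⟨by omega, h3⟩
    have := S.le_max' _ ht1
    omega
  have hceven := ih c hcb (by omega) hcC
  omega

/-- The cut points determine the involution. -/
lemma determine {σ : Equiv.Perm (Fin n)}
    (hinv : τ * τ = 1) (hfpf : ∀ i, τ i ≠ i)
    (hav : ¬ ∃ i j k : Fin n, i < j ∧ j < k ∧ τ j < τ k ∧ τ k < τ i)
    (hinv' : σ * σ = 1) (hfpf' : ∀ i, σ i ≠ i)
    (hav' : ¬ ∃ i j k : Fin n, i < j ∧ j < k ∧ σ j < σ k ∧ σ k < σ i)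
    (hiff : ∀ c ≤ n, (Closed τ c ↔ Closed σ c)) : τ = σ := by
  apply Equiv.ext
  intro x
  classical
  set S := (Finset.range ((x : ℕ) + 1)).filter (fun c => Closed τ c) with hS
  have h0S : (0 : ℕ) ∈ S := by
    rw [hS, Finset.mem_filter, Finset.mem_range]
    exact ⟨by omega, closed_zero⟩
  have hne : S.Nonempty := ⟨0, h0S⟩
  set c := S.max' hne with hcdef
  have hcS := S.max'_mem hne
  have hcx : c < (x : ℕ) + 1 := Finset.mem_range.mp (Finset.mem_filter.mp hcS).1
  have hcC : Closed τ c := (Finset.mem_filter.mp hcS).2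
  have hcn : c < n := by have := x.isLt; omega
  have hcC' : Closed σ c := (hiff c (by omega)).mp hcC
  obtain ⟨h1, h2, h3, h4⟩ := block hinv hfpf hav hcC hcn
  obtain ⟨g1, g2, g3, g4⟩ := block hinv' hfpf' hav' hcC' hcn
  set t := (τ (⟨c, hcn⟩ : Fin n) : ℕ) with htd
  set t' := (σ (⟨c, hcn⟩ : Fin n) : ℕ) with htd'
  have htn : t < n := (τ (⟨c, hcn⟩ : Fin n)).isLt
  have htn' : t' < n := (σ (⟨c, hcn⟩ : Fin n)).isLt
  have htt : t = t' := by
    have ha : Closed σ (t + 1) := (hiff (t + 1) (by omega)).mp h3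
    have hb : Closed τ (t' + 1) := (hiff (t' + 1) (by omega)).mpr g3
    have h5 : t' < t + 1 := no_mid hcn ha (by omega)
    have h6 : t < t' + 1 := no_mid hcn hb (by omega)
    omega
  have hxt : (x : ℕ) ≤ t := by
    by_contra hgt
    push_neg at hgt
    have ht1 : t + 1 ∈ S := by
      rw [hS, Finset.mem_filter, Finset.mem_range]
      exact ⟨by omega, h3⟩
    have := S.le_max' _ ht1
    omega
  have e1 := h2 x (by omega) hxt
  have e2 := g2 x (by omega) (by omega)
  exact Fin.ext (by omega)

end Struct

section Construct

variable (h : ℕ) (F : Finset (Fin (h - 1)))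

/-- The boundary set associated to a finset of internal cut positions. -/
def Bs : Finset ℕ := insert 0 (insert (2 * h) (F.image fun i => 2 * ((i.val : ℕ) + 1)))

lemma Bs_zero : (0 : ℕ) ∈ Bs h F := by simp [Bs]

lemma Bs_top : 2 * h ∈ Bs h F := by simp [Bs]

lemma Bs_even {b : ℕ} (hb : b ∈ Bs h F) : b % 2 = 0 := by
  simp only [Bs, Finset.mem_insert, Finset.mem_image] at hb
  rcases hb with rfl | rfl | ⟨i, _, rfl⟩ <;> omega

lemma Bs_le {b : ℕ} (hb : b ∈ Bs h F) : b ≤ 2 * h := by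
  simp only [Bs, Finset.mem_insert, Finset.mem_image] at hb
  rcases hb with rfl | rfl | ⟨i, _, rfl⟩
  · omega
  · omega
  · have := i.isLt; omega

/-- Largest boundary `≤ x`. -/
def cB (x : ℕ) : ℕ :=
  ((Bs h F).filter (· ≤ x)).max' ⟨0, Finset.mem_filter.mpr ⟨Bs_zero h F, Nat.zero_le x⟩⟩

/-- Smallest boundary `> x`. -/
noncomputable def dB (x : ℕ) : ℕ := sInf {b | b ∈ Bs h F ∧ x < b}

lemma cB_mem (x : ℕ) : cB h F x ∈ Bs h F ∧ cB h F x ≤ x := by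
  have := Finset.max'_mem ((Bs h F).filter (· ≤ x))
    ⟨0, Finset.mem_filter.mpr ⟨Bs_zero h F, Nat.zero_le x⟩⟩
  exact ⟨(Finset.mem_filter.mp this).1, (Finset.mem_filter.mp this).2⟩

lemma cB_ge {x b : ℕ} (hb : b ∈ Bs h F) (hbx : b ≤ x) : b ≤ cB h F x :=
  Finset.le_max' ((Bs h F).filter (· ≤ x)) b (Finset.mem_filter.mpr ⟨hb, hbx⟩)

lemma dB_mem {x : ℕ} (hx : x < 2 * h) : dB h F x ∈ Bs h F ∧ x < dB h F x :=
  Nat.sInf_mem (⟨2 * h, Bs_top h F, hx⟩ : {b | b ∈ Bs h F ∧ x < b}.Nonempty)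

lemma dB_le {x b : ℕ} (hb : b ∈ Bs h F) (hbx : x < b) : dB h F x ≤ b :=
  Nat.sInf_le ⟨hb, hbx⟩

lemma same_block {x y : ℕ} (hx : x < 2 * h) (hy1 : cB h F x ≤ y) (hy2 : y < dB h F x) :
    cB h F y = cB h F x ∧ dB h F y = dB h F x := by
  have hcm := cB_mem h F x
  have hdm := dB_mem h F hx
  have hcm' := cB_mem h F y
  have h1 : cB h F x ≤ cB h F y := cB_ge h F hcm.1 hy1
  have h2 : cB h F y ≤ cB h F x := by
    by_contra hgt
    push_neg at hgt
    rcases Nat.lt_or_ge x (cB h F y) with hxlt | hle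
    · have := dB_le h F hcm'.1 hxlt
      omega
    · have := cB_ge h F hcm'.1 hle
      omega
  have h3 : dB h F y ≤ dB h F x := dB_le h F hdm.1 hy2
  have hy2h : y < 2 * h := lt_of_lt_of_le hy2 (Bs_le h F hdm.1)
  have hdm' := dB_mem h F hy2h
  have h4 : dB h F x ≤ dB h F y := by
    by_contra hgt
    push_neg at hgt
    rcases Nat.lt_or_ge x (dB h F y) with hxlt | hle
    · have := dB_le h F hdm'.1 hxlt
      omega
    · have := cB_ge h F hdm'.1 hle
      omega
  omega

variable (hh : 1 ≤ h)

/-- The block-reversal map. -/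
noncomputable def gB (x : Fin (2 * h)) : Fin (2 * h) :=
  ⟨cB h F (x : ℕ) + dB h F (x : ℕ) - 1 - (x : ℕ), by
    have hcm := cB_mem h F (x : ℕ)
    have hdm := dB_mem h F x.isLt
    have := Bs_le h F hdm.1
    omega⟩

lemma gB_bounds (x : Fin (2 * h)) :
    cB h F (x : ℕ) ≤ (gB h F x : ℕ) ∧ (gB h F x : ℕ) < dB h F (x : ℕ) := by
  have hcm := cB_mem h F (x : ℕ)
  have hdm := dB_mem h F x.isLt
  have hgv : (gB h F x : ℕ) = cB h F (x : ℕ) + dB h F (x : ℕ) - 1 - (x : ℕ) := rfl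
  omega

lemma gB_invol : Function.Involutive (gB h F) := by
  intro x
  have hcm := cB_mem h F (x : ℕ)
  have hdm := dB_mem h F x.isLt
  have hb := gB_bounds h F x
  have hsb := same_block h F x.isLt hb.1 hb.2
  have hgv : (gB h F x : ℕ) = cB h F (x : ℕ) + dB h F (x : ℕ) - 1 - (x : ℕ) := rfl
  have hgv2 : (gB h F (gB h F x) : ℕ) =
      cB h F ((gB h F x : ℕ)) + dB h F ((gB h F x : ℕ)) - 1 - ((gB h F x : ℕ)) := rfl
  apply Fin.ext
  rw [hgv2, hsb.1, hsb.2]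
  omega

/-- The constructed involution. -/
noncomputable def tF : Equiv.Perm (Fin (2 * h)) := (gB_invol h F).toPerm

lemma tF_apply (x : Fin (2 * h)) : tF h F x = gB h F x := rfl

lemma tF_mul : tF h F * tF h F = 1 := by
  apply Equiv.ext
  intro x
  rw [Equiv.Perm.mul_apply, Equiv.Perm.one_apply, tF_apply, tF_apply]
  exact gB_invol h F x

lemma tF_fpf : ∀ i, tF h F i ≠ i := by
  intro x he
  have hcm := cB_mem h F (x : ℕ)
  have hdm := dB_mem h F x.isLt
  have hce := Bs_even h F hcm.1
  have hde := Bs_even h F hdm.1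
  have hgv : (gB h F x : ℕ) = cB h F (x : ℕ) + dB h F (x : ℕ) - 1 - (x : ℕ) := rfl
  have hvv : (tF h F x : ℕ) = (x : ℕ) := by rw [he]
  rw [tF_apply] at hvv
  omega

lemma tF_av :
    ¬ ∃ i j k : Fin (2 * h), i < j ∧ j < k ∧ tF h F j < tF h F k ∧ tF h F k < tF h F i := by
  rintro ⟨i, j, k, hij, hjk, h1, h2⟩
  rw [Fin.lt_def] at hij hjk h1 h2
  rw [tF_apply, tF_apply] at h1
  rw [tF_apply, tF_apply] at h2
  have hbi := gB_bounds h F i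
  have hbj := gB_bounds h F j
  have hbk := gB_bounds h F k
  have hci := cB_mem h F (i : ℕ)
  rcases Nat.lt_or_ge (k : ℕ) (dB h F (i : ℕ)) with hlt | hge
  · have hcile : cB h F (i : ℕ) ≤ (i : ℕ) := hci.2
    have hsj := same_block h F (y := (j : ℕ)) i.isLt (by omega) (by omega)
    have hsk := same_block h F (y := (k : ℕ)) i.isLt (by omega) hlt
    have hgj : (gB h F j : ℕ) = cB h F (j : ℕ) + dB h F (j : ℕ) - 1 - (j : ℕ) := rfl
    have hgk : (gB h F k : ℕ) = cB h F (k : ℕ) + dB h F (k : ℕ) - 1 - (k : ℕ) := rfl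
    rw [hsj.1, hsj.2] at hgj
    rw [hsk.1, hsk.2] at hgk
    omega
  · have hdi := dB_mem h F i.isLt
    have hck := cB_ge h F hdi.1 hge
    have hbk2 := (cB_mem h F (k : ℕ)).1
    omega

lemma tF_closed_of_mem {b : ℕ} (hb : b ∈ Bs h F) : Closed (tF h F) b := by
  intro y hy
  rw [tF_apply]
  have hbd := gB_bounds h F y
  have := dB_le h F hb hy
  omega

lemma tF_not_closed {b : ℕ} (hb : b ∉ Bs h F) (hb0 : 0 < b) (hbn : b < 2 * h) :
    ¬ Closed (tF h F) b := by
  intro hcl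
  have hx : b - 1 < 2 * h := by omega
  have hcm := cB_mem h F (b - 1)
  have hdm := dB_mem h F hx
  have hdgt : b < dB h F (b - 1) := by
    have h1 : b ≤ dB h F (b - 1) := by omega
    rcases eq_or_lt_of_le h1 with he | hlt
    · exact absurd (he ▸ hdm.1) hb
    · exact hlt
  have hpn : cB h F (b - 1) < 2 * h := by omega
  have hsb := same_block h F hx (le_refl _) (by omega)
  have hgp : (gB h F ⟨cB h F (b - 1), hpn⟩ : ℕ) =
      cB h F (cB h F (b - 1)) + dB h F (cB h F (b - 1)) - 1 - cB h F (b - 1) := rfl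
  rw [hsb.1, hsb.2] at hgp
  have := hcl ⟨cB h F (b - 1), hpn⟩ (by show cB h F (b - 1) < b; omega)
  rw [tF_apply] at this
  omega

end Construct

theorem card_fpf_involutions_avoiding_312 (h : ℕ) (hh : 1 ≤ h) :
    Nat.card {τ : Equiv.Perm (Fin (2 * h)) //
        τ * τ = 1 ∧ (∀ i, τ i ≠ i) ∧ Av312 τ} = 2 ^ (h - 1) := by
  classical
  set T := {τ : Equiv.Perm (Fin (2 * h)) // τ * τ = 1 ∧ (∀ i, τ i ≠ i) ∧ Av312 τ} with hT
  set Φ : T → Finset (Fin (h - 1)) := fun τ =>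
    Finset.filter (fun i : Fin (h - 1) => Av312Aux.Closed τ.1 (2 * ((i : ℕ) + 1)))
      Finset.univ with hΦ
  have key : ∀ τ σ : T, Φ τ = Φ σ → ∀ c, c ≤ 2 * h →
      Av312Aux.Closed τ.1 c → Av312Aux.Closed σ.1 c := by
    intro τ σ hfs c hcn hcl
    have hce : c % 2 = 0 := evenClosed τ.2.1 τ.2.2.1 τ.2.2.2 c hcn hcl
    rcases Nat.eq_zero_or_pos c with rfl | hc0
    · exact closed_zero
    rcases eq_or_lt_of_le hcn with rfl | hlt
    · exact closed_n
    have hm2 : 2 ≤ c := by omega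
    have hh2 : 2 ≤ h := by omega
    set i : Fin (h - 1) := ⟨c / 2 - 1, by omega⟩ with hi
    have hival : (i : ℕ) = c / 2 - 1 := rfl
    have hiv : 2 * ((i : ℕ) + 1) = c := by rw [hival]; omega
    have hmem : i ∈ Φ τ :=
      Finset.mem_filter.mpr ⟨Finset.mem_univ _, by rw [hiv]; exact hcl⟩
    rw [hfs] at hmem
    have h2 := (Finset.mem_filter.mp hmem).2
    rwa [hiv] at h2
  have hbij : Function.Bijective Φ := by
    constructor
    · intro τ σ hfs
      exact Subtype.ext (determine τ.2.1 τ.2.2.1 τ.2.2.2 σ.2.1 σ.2.2.1 σ.2.2.2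
        (fun c hc => ⟨key τ σ hfs c hc, key σ τ hfs.symm c hc⟩))
    · intro F
      refine ⟨⟨tF h F, tF_mul h F, tF_fpf h F, tF_av h F⟩, ?_⟩
      rw [hΦ]
      ext i
      simp only [Finset.mem_filter, Finset.mem_univ, true_and]
      constructor
      · intro hcl
        by_contra hiF
        have hnb : 2 * ((i : ℕ) + 1) ∉ Bs h F := by
          intro hmem
          simp only [Bs, Finset.mem_insert, Finset.mem_image] at hmem
          rcases hmem with he | he | ⟨j, hjF, hje⟩
          · omega
          · have := i.isLt; omega
          · have : j = i := Fin.ext (by omega)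
            rw [this] at hjF
            exact hiF hjF
        have hilt := i.isLt
        exact tF_not_closed h F hnb (by omega) (by omega) hcl
      · intro hiF
        apply tF_closed_of_mem h F
        simp only [Bs, Finset.mem_insert, Finset.mem_image]
        exact Or.inr (Or.inr ⟨i, hiF, rfl⟩)
  rw [Nat.card_eq_of_bijective Φ hbij, Nat.card_eq_fintype_card, Fintype.card_finset,
    Fintype.card_fin]

end Av312Aux

theorem card_fpf_involutions_avoiding_312 (h : ℕ) (hh : 1 ≤ h) :
    Nat.card {τ : Equiv.Perm (Fin (2 * h)) //
        τ * τ = 1 ∧ (∀ i, τ i ≠ i) ∧ Av312 τ} = 2 ^ (h - 1) :=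
  Av312Aux.card_fpf_involutions_avoiding_312 h hh
end

section
/- For every n, the number of centrosymmetric involutions of {1,...,n} avoiding both 3412 and 4321 equals 2^{⌊n/2⌋}. -/
/-- `τ` is centrosymmetric: `τ(i) + τ(n+1-i) = n+1` in one-line (1-indexed) terms. -/
def Centrosymmetric {n : ℕ} (τ : Equiv.Perm (Fin n)) : Prop :=
  ∀ i : Fin n, (τ i : ℕ) + (τ i.rev : ℕ) + 1 = n

namespace CSI

/-- largest cut ≤ i -/
def aa (cut : ℕ → Bool) (i : ℕ) : ℕ := Nat.findGreatest (fun c => cut c = true) i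

/-- smallest cut > i (with escape value `n+i+1`) -/
def ee (n : ℕ) (cut : ℕ → Bool) (i : ℕ) : ℕ :=
  Nat.find (show ∃ c, i < c ∧ (cut c = true ∨ c = n + i + 1) from ⟨n+i+1, by omega, Or.inr rfl⟩)

lemma aa_le (cut : ℕ → Bool) (i : ℕ) : aa cut i ≤ i := Nat.findGreatest_le _

lemma aa_cut {cut : ℕ → Bool} (h0 : cut 0 = true) (i : ℕ) : cut (aa cut i) = true :=
  Nat.findGreatest_spec (P := fun c => cut c = true) (Nat.zero_le i) h0

lemma aa_max {cut : ℕ → Bool} {i c : ℕ} (h1 : aa cut i < c) (h2 : c ≤ i) : cut c = false := by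
  have := Nat.findGreatest_is_greatest h1 h2
  simpa using this

lemma ee_spec (n : ℕ) (cut : ℕ → Bool) (i : ℕ) :
    i < ee n cut i ∧ (cut (ee n cut i) = true ∨ ee n cut i = n + i + 1) := by
  have h := Nat.find_spec (show ∃ c, i < c ∧ (cut c = true ∨ c = n + i + 1) from
      ⟨n+i+1, by omega, Or.inr rfl⟩)
  exact h

lemma lt_ee (n : ℕ) (cut : ℕ → Bool) (i : ℕ) : i < ee n cut i := (ee_spec n cut i).1

lemma ee_le {n : ℕ} {cut : ℕ → Bool} (hn : cut n = true) {i : ℕ} (hi : i < n) :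
    ee n cut i ≤ n := Nat.find_le ⟨hi, Or.inl hn⟩

lemma ee_cut {n : ℕ} {cut : ℕ → Bool} {i : ℕ} (hle : ee n cut i ≤ n) : cut (ee n cut i) = true := by
  rcases (ee_spec n cut i).2 with h | h
  · exact h
  · exfalso; omega

lemma ee_min {n : ℕ} {cut : ℕ → Bool} {i c : ℕ} (h1 : i < c) (h2 : c < ee n cut i) :
    cut c = false := by
  have h3 : ¬ (i < c ∧ (cut c = true ∨ c = n + i + 1)) := by
    unfold ee at h2
    exact Nat.find_min _ h2
  simp only [not_and, not_or] at h3
  simpa using (h3 h1).1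

lemma nocut {n : ℕ} {cut : ℕ → Bool} {i c : ℕ} (h1 : aa cut i < c) (h2 : c < ee n cut i) :
    cut c = false := by
  rcases le_or_gt c i with h | h
  · exact aa_max h1 h
  · exact ee_min h h2

lemma aa_lt_ee (n : ℕ) (cut : ℕ → Bool) (i : ℕ) : aa cut i < ee n cut i :=
  lt_of_le_of_lt (aa_le cut i) (lt_ee n cut i)

lemma aa_eq_of {n : ℕ} {cut : ℕ → Bool} (h0 : cut 0 = true) {i j : ℕ}
    (h1 : aa cut i ≤ j) (h2 : j < ee n cut i) : aa cut j = aa cut i := by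
  refine le_antisymm ?_ (Nat.le_findGreatest h1 (aa_cut h0 i))
  by_contra h
  push_neg at h
  have hc : cut (aa cut j) = true := aa_cut h0 j
  have : cut (aa cut j) = false := nocut h (lt_of_le_of_lt (aa_le cut j) h2)
  simp [this] at hc

lemma ee_eq_of {n : ℕ} {cut : ℕ → Bool} (hn : cut n = true) {i j : ℕ} (hi : i < n)
    (h1 : aa cut i ≤ j) (h2 : j < ee n cut i) : ee n cut j = ee n cut i := by
  have hle : ee n cut j ≤ ee n cut i := Nat.find_le ⟨h2, Or.inl (ee_cut (ee_le hn hi))⟩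
  refine le_antisymm hle ?_
  by_contra h
  push_neg at h
  have hc : cut (ee n cut j) = true := ee_cut (le_trans hle (ee_le hn hi))
  have : cut (ee n cut j) = false :=
    nocut (lt_of_le_of_lt h1 (lt_ee n cut j)) h
  simp [this] at hc


def fmap (n : ℕ) (cut : ℕ → Bool) (i : ℕ) : ℕ :=
  if i = aa cut i then ee n cut i - 1 else if i = ee n cut i - 1 then aa cut i else i

lemma fmap_eq_of {n : ℕ} {cut : ℕ → Bool} {a e j : ℕ} (h1 : aa cut j = a) (h2 : ee n cut j = e) :
    fmap n cut j = if j = a then e - 1 else if j = e - 1 then a else j := by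
  unfold fmap; rw [h1, h2]

lemma fmap_mem (n : ℕ) (cut : ℕ → Bool) (i : ℕ) :
    aa cut i ≤ fmap n cut i ∧ fmap n cut i < ee n cut i := by
  have h1 := aa_le cut i
  have h2 := lt_ee n cut i
  have h3 := aa_lt_ee n cut i
  unfold fmap
  split_ifs <;> omega

lemma fmap_lt {n : ℕ} {cut : ℕ → Bool} (hn : cut n = true) {i : ℕ} (hi : i < n) :
    fmap n cut i < n := lt_of_lt_of_le (fmap_mem n cut i).2 (ee_le hn hi)

lemma fmap_invol {n : ℕ} {cut : ℕ → Bool} (h0 : cut 0 = true) (hn : cut n = true)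
    {i : ℕ} (hi : i < n) : fmap n cut (fmap n cut i) = i := by
  have hm := fmap_mem n cut i
  have ha : aa cut (fmap n cut i) = aa cut i := aa_eq_of h0 hm.1 hm.2
  have he : ee n cut (fmap n cut i) = ee n cut i := ee_eq_of hn hi hm.1 hm.2
  have hout : fmap n cut (fmap n cut i) =
      if fmap n cut i = aa cut i then ee n cut i - 1
      else if fmap n cut i = ee n cut i - 1 then aa cut i else fmap n cut i :=
    fmap_eq_of ha he
  have hin : fmap n cut i =
      if i = aa cut i then ee n cut i - 1 else if i = ee n cut i - 1 then aa cut i else i :=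
    fmap_eq_of rfl rfl
  have h1 := aa_le cut i
  have h2 := lt_ee n cut i
  have h3 := aa_lt_ee n cut i
  rw [hout]
  split_ifs at hin ⊢ <;> omega

lemma ee_le_aa {n : ℕ} {cut : ℕ → Bool} (hn : cut n = true) {i j : ℕ} (hi : i < n)
    (hij : ee n cut i ≤ j) : ee n cut i ≤ aa cut j :=
  Nat.le_findGreatest hij (ee_cut (ee_le hn hi))

lemma same_block {n : ℕ} {cut : ℕ → Bool} (h0 : cut 0 = true) (hn : cut n = true)
    {i j : ℕ} (hi : i < n) (hij : i < j) (hval : fmap n cut j ≤ fmap n cut i) :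
    aa cut j = aa cut i ∧ ee n cut j = ee n cut i := by
  by_cases h : j < ee n cut i
  · exact ⟨aa_eq_of h0 (le_trans (aa_le cut i) hij.le) h,
      ee_eq_of hn hi (le_trans (aa_le cut i) hij.le) h⟩
  · exfalso
    push_neg at h
    have h1 : ee n cut i ≤ aa cut j := ee_le_aa hn hi h
    have h2 := (fmap_mem n cut i).2
    have h3 := (fmap_mem n cut j).1
    omega

def tperm (n : ℕ) {cut : ℕ → Bool} (h0 : cut 0 = true) (hn : cut n = true) :
    Equiv.Perm (Fin n) :=
  Function.Involutive.toPerm (fun i => ⟨fmap n cut i, fmap_lt hn i.isLt⟩)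
    (fun i => Fin.ext (fmap_invol h0 hn i.isLt))

lemma tperm_apply {n : ℕ} {cut : ℕ → Bool} (h0 : cut 0 = true) (hn : cut n = true) (i : Fin n) :
    (tperm n h0 hn i : ℕ) = fmap n cut i := rfl

lemma tperm_sq {n : ℕ} {cut : ℕ → Bool} (h0 : cut 0 = true) (hn : cut n = true) :
    tperm n h0 hn * tperm n h0 hn = 1 := by
  ext i
  simp only [Equiv.Perm.mul_apply, Equiv.Perm.one_apply]
  exact congrArg Fin.val (Function.Involutive.toPerm _ _ |>.left_inv i) ▸ rfl


lemma tperm_av4321 {n : ℕ} {cut : ℕ → Bool} (h0 : cut 0 = true) (hn : cut n = true) :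
    Av4321 (tperm n h0 hn) := by
  rintro ⟨i, j, k, l, hij, hjk, hkl, h1, h2, h3⟩
  rw [Fin.lt_def] at hij hjk hkl h1 h2 h3
  rw [tperm_apply, tperm_apply] at h1 h2 h3
  have bij := same_block h0 hn i.isLt hij (le_of_lt h3)
  have bjk := same_block h0 hn j.isLt hjk (le_of_lt h2)
  have bkl := same_block h0 hn k.isLt hkl (le_of_lt h1)
  have haai := aa_le cut (i : ℕ)
  have hlee : (l : ℕ) < ee n cut (l : ℕ) := lt_ee n cut _
  have hkee : (k : ℕ) < ee n cut (k : ℕ) := lt_ee n cut _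
  have hfj : fmap n cut (j : ℕ) = (j : ℕ) := by
    rw [fmap_eq_of (rfl : aa cut (j:ℕ) = _) (rfl : ee n cut (j:ℕ) = _)]
    rw [if_neg (by omega), if_neg (by omega)]
  have hfk : fmap n cut (k : ℕ) = (k : ℕ) := by
    rw [fmap_eq_of (rfl : aa cut (k:ℕ) = _) (rfl : ee n cut (k:ℕ) = _)]
    rw [if_neg (by omega), if_neg (by omega)]
  omega

lemma tperm_av3412 {n : ℕ} {cut : ℕ → Bool} (h0 : cut 0 = true) (hn : cut n = true) :
    Av3412 (tperm n h0 hn) := by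
  rintro ⟨i, j, k, l, hij, hjk, hkl, h1, h2, h3⟩
  rw [Fin.lt_def] at hij hjk hkl h1 h2 h3
  rw [tperm_apply, tperm_apply] at h1 h2 h3
  -- l is in the same block as i
  have bil := same_block h0 hn i.isLt (by omega : (i:ℕ) < (l:ℕ)) (le_of_lt h2)
  have haai := aa_le cut (i : ℕ)
  have hlee : (l : ℕ) < ee n cut (l : ℕ) := lt_ee n cut _
  -- j, k lie within the block of i
  have hbj : aa cut (j:ℕ) = aa cut (i:ℕ) ∧ ee n cut (j:ℕ) = ee n cut (i:ℕ) :=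
    ⟨aa_eq_of (n := n) h0 (by omega) (by omega), ee_eq_of hn i.isLt (by omega) (by omega)⟩
  have hbk : aa cut (k:ℕ) = aa cut (i:ℕ) ∧ ee n cut (k:ℕ) = ee n cut (i:ℕ) :=
    ⟨aa_eq_of (n := n) h0 (by omega) (by omega), ee_eq_of hn i.isLt (by omega) (by omega)⟩
  -- i is interior or last, but τ i < τ j forces i interior
  have hiee : (i : ℕ) < ee n cut (i : ℕ) := lt_ee n cut _
  have hmj := fmap_mem n cut (j : ℕ)
  have hmk := fmap_mem n cut (k : ℕ)
  have hml := fmap_mem n cut (l : ℕ)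
  have hfi : fmap n cut (i : ℕ) = (i : ℕ) := by
    rw [fmap_eq_of (rfl : aa cut (i:ℕ) = _) (rfl : ee n cut (i:ℕ) = _)]
    rw [if_neg, if_neg]
    · omega -- i ≠ ee i - 1 since j < ee j = ee i and i < j
    · -- i ≠ aa i : else fmap i = ee i - 1 ≥ fmap j, contradicting h3
      intro h
      have : fmap n cut (i:ℕ) = ee n cut (i:ℕ) - 1 := by
        rw [fmap_eq_of (rfl : aa cut (i:ℕ) = _) (rfl : ee n cut (i:ℕ) = _), if_pos h]
      omega
  have hfj : fmap n cut (j : ℕ) = (j : ℕ) := by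
    rw [fmap_eq_of (rfl : aa cut (j:ℕ) = _) (rfl : ee n cut (j:ℕ) = _)]
    rw [if_neg (by omega), if_neg ?hc]
    case hc =>
      -- j = ee j - 1 would give fmap j = aa j ≤ i = fmap i, contra h3
      intro h
      have : fmap n cut (j:ℕ) = aa cut (j:ℕ) := by
        rw [fmap_eq_of (rfl : aa cut (j:ℕ) = _) (rfl : ee n cut (j:ℕ) = _),
          if_neg (by omega), if_pos h]
      omega
  have hfk : fmap n cut (k : ℕ) = (k : ℕ) := by
    rw [fmap_eq_of (rfl : aa cut (k:ℕ) = _) (rfl : ee n cut (k:ℕ) = _)]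
    rw [if_neg (by omega), if_neg (by omega)]
  omega

section Rev
variable {n : ℕ} {cut : ℕ → Bool} (h0 : cut 0 = true) (hn : cut n = true)
  (hsym : ∀ c ≤ n, cut (n - c) = cut c)

include h0 hn hsym

lemma aa_rev {i : ℕ} (hi : i < n) : aa cut (n - 1 - i) = n - ee n cut i := by
  have he1 : i < ee n cut i := lt_ee n cut i
  have he2 : ee n cut i ≤ n := ee_le hn hi
  refine le_antisymm ?_ (Nat.le_findGreatest (by omega)
    (by rw [hsym _ he2]; exact ee_cut he2))
  by_contra h
  push_neg at h
  set c := aa cut (n - 1 - i) with hc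
  have hc1 : cut c = true := aa_cut h0 _
  have hc2 : c ≤ n - 1 - i := aa_le cut _
  have hc3 : cut (n - c) = false := ee_min (show i < n - c by omega) (show n - c < ee n cut i by omega)
  rw [hsym _ (by omega)] at hc3
  simp [hc3] at hc1

lemma ee_rev {i : ℕ} (hi : i < n) : ee n cut (n - 1 - i) = n - aa cut i := by
  have ha1 : aa cut i ≤ i := aa_le cut i
  refine le_antisymm (Nat.find_le ⟨by omega, Or.inl ?_⟩) ?_
  · rw [hsym _ (by omega)]; exact aa_cut h0 i
  · by_contra h
    push_neg at h
    set c := ee n cut (n - 1 - i) with hc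
    have hc1 : n - 1 - i < c := lt_ee n cut _
    have hcn : c ≤ n := by omega
    have hc2 : cut c = true := ee_cut hcn
    have hc3 : cut (n - c) = false := aa_max (show aa cut i < n - c by omega) (show n - c ≤ i by omega)
    rw [hsym _ hcn] at hc3
    simp [hc3] at hc2

lemma tperm_centro : Centrosymmetric (tperm n h0 hn) := by
  intro i
  have hi := i.isLt
  have hrev : (i.rev : ℕ) = n - 1 - (i : ℕ) := by
    rw [Fin.val_rev]; omega
  rw [tperm_apply, tperm_apply, hrev]
  have ha1 : aa cut (i : ℕ) ≤ (i : ℕ) := aa_le cut _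
  have he1 : (i : ℕ) < ee n cut (i : ℕ) := lt_ee n cut _
  have he2 : ee n cut (i : ℕ) ≤ n := ee_le hn hi
  have hA := aa_rev h0 hn hsym hi
  have hE := ee_rev h0 hn hsym hi
  rw [fmap_eq_of (rfl : aa cut (i:ℕ) = _) (rfl : ee n cut (i:ℕ) = _),
    fmap_eq_of hA hE]
  split_ifs <;> omega

end Rev

def NCut {n : ℕ} (τ : Equiv.Perm (Fin n)) (c : ℕ) : Prop :=
  ∀ i : Fin n, (i : ℕ) < c → (τ i : ℕ) < c

instance {n : ℕ} (τ : Equiv.Perm (Fin n)) (c : ℕ) : Decidable (NCut τ c) := by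
  unfold NCut; infer_instance

lemma tperm_cut_iff {n : ℕ} {cut : ℕ → Bool} (h0 : cut 0 = true) (hn : cut n = true)
    {c : ℕ} (hc : c ≤ n) : NCut (tperm n h0 hn) c ↔ cut c = true := by
  constructor
  · intro h
    by_contra hcf
    have hc0 : c ≠ 0 := fun h' => hcf (h' ▸ h0)
    have hcn : c ≠ n := fun h' => hcf (h' ▸ hn)
    have hc1 : c - 1 < n := by omega
    set a := aa cut (c - 1) with ha
    have ha1 : a ≤ c - 1 := aa_le cut _
    have ha2 : a < n := by omega
    have haa : aa cut a = a := aa_eq_of h0 (le_refl _) (lt_of_le_of_lt ha1 (lt_ee n cut _))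
    have hee : ee n cut a = ee n cut (c - 1) :=
      ee_eq_of hn hc1 (le_refl _) (lt_of_le_of_lt ha1 (lt_ee n cut _))
    have hegt : c < ee n cut (c - 1) := by
      have h1 : c - 1 < ee n cut (c - 1) := lt_ee n cut _
      have h2 : ee n cut (c - 1) ≤ n := ee_le hn hc1
      have h3 : ee n cut (c - 1) ≠ c := fun h' => hcf (h' ▸ ee_cut h2)
      omega
    have hfa : fmap n cut a = ee n cut (c - 1) - 1 := by
      rw [fmap_eq_of haa hee, if_pos rfl]
    have h5 := h ⟨a, ha2⟩ (show ((⟨a, ha2⟩ : Fin n) : ℕ) < c from by show a < c; omega)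
    rw [tperm_apply] at h5
    rw [show ((⟨a, ha2⟩ : Fin n) : ℕ) = a from rfl] at h5
    omega
  · intro h i hic
    have h1 : ee n cut (i : ℕ) ≤ c := Nat.find_le ⟨hic, Or.inl h⟩
    have h2 := (fmap_mem n cut (i : ℕ)).2
    rw [tperm_apply]
    omega

section ClaimA

variable {n : ℕ} {τ : Equiv.Perm (Fin n)} (hinv : ∀ i, τ (τ i) = i)
  (h3412 : Av3412 τ) (h4321 : Av4321 τ) (hcent : Centrosymmetric τ)

/-- cut set of a permutation -/
def cutOf {n : ℕ} (τ : Equiv.Perm (Fin n)) : ℕ → Bool := fun c => decide (NCut τ c)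

lemma cutOf_zero : cutOf τ 0 = true := by
  simp [cutOf, NCut]

lemma cutOf_n : cutOf τ n = true := by
  simp only [cutOf, decide_eq_true_eq]
  exact fun i _ => (τ i).isLt

include hinv hcent in
lemma cutOf_sym : ∀ c ≤ n, cutOf τ (n - c) = cutOf τ c := by
  have key : ∀ c ≤ n, NCut τ c → NCut τ (n - c) := by
    intro c hc h j hj
    by_contra hτ
    push_neg at hτ
    have hcj := hcent j
    have hrev : (j.rev : ℕ) = n - 1 - (j : ℕ) := by rw [Fin.val_rev]; omega
    have hτj : (τ j : ℕ) < n := (τ j).isLt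
    have hm : ((τ j.rev : Fin n) : ℕ) < c := by omega
    have := h (τ j.rev) hm
    rw [show τ (τ j.rev) = j.rev from hinv j.rev] at this
    omega
  intro c hc
  have h2 : n - (n - c) = c := by omega
  have : NCut τ (n - c) ↔ NCut τ c :=
    ⟨fun h => h2 ▸ key (n - c) (by omega) h, key c hc⟩
  simp [cutOf, decide_eq_decide.mpr this]

include hinv h3412 h4321 in
lemma eq_fmap (i : Fin n) : (τ i : ℕ) = fmap n (cutOf τ) (i : ℕ) := by
  have h0 : cutOf τ 0 = true := cutOf_zero
  have hn : cutOf τ n = true := cutOf_n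
  set cut := cutOf τ with hcut
  set a := aa cut (i : ℕ) with ha
  set e := ee n cut (i : ℕ) with he
  have ha1 : a ≤ (i : ℕ) := aa_le cut _
  have he1 : (i : ℕ) < e := lt_ee n cut _
  have he2 : e ≤ n := ee_le hn i.isLt
  have hNa : NCut τ a := of_decide_eq_true (aa_cut h0 (i : ℕ))
  have hNe : NCut τ e := of_decide_eq_true (ee_cut (i := (i:ℕ)) he2)
  have hnon : ∀ c, a < c → c < e → ¬ NCut τ c := fun c hc1 hc2 h => by
    have := nocut (n := n) (i := (i : ℕ)) hc1 hc2
    rw [hcut] at this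
    simp [cutOf, h] at this
  -- the block is invariant
  have hblock : ∀ j : Fin n, a ≤ (j : ℕ) → (j : ℕ) < e → a ≤ (τ j : ℕ) ∧ (τ j : ℕ) < e := by
    intro j hj1 hj2
    refine ⟨?_, hNe j hj2⟩
    by_contra h
    push_neg at h
    have := hNa (τ j) h
    rw [hinv j] at this
    omega
  by_cases hsz : e = a + 1
  · -- singleton block : i = a, τ i = i
    have hia : (i : ℕ) = a := by omega
    have := hblock i (by omega) he1
    have hfi : fmap n cut (i : ℕ) = e - 1 := by
      rw [fmap_eq_of ha.symm he.symm, if_pos hia]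
    omega
  · -- block of size ≥ 2
    have hsz2 : a + 2 ≤ e := by omega
    have hA : a < n := by omega
    set A : Fin n := ⟨a, hA⟩ with hAdef
    have hAa : (A : ℕ) = a := rfl
    have hbA := hblock A (le_refl _) (by omega)
    -- Step 1 : τ A = e - 1
    have step1 : (τ A : ℕ) = e - 1 := by
      set y := (τ A : ℕ) with hy
      have hya : y ≠ a := by
        intro hya
        apply hnon (a + 1) (by omega) (by omega)
        intro j hj
        rcases Nat.lt_or_ge (j : ℕ) a with h' | h'
        · exact lt_trans (hNa j h') (by omega)
        · have hje : (j : ℕ) = a := by omega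
          have : j = A := Fin.ext hje
          rw [this]
          omega
      by_contra hne
      have hylt : y < e - 1 := by omega
      apply hnon (y + 1) (by omega) (by omega)
      intro j hj
      rcases Nat.lt_or_ge (j : ℕ) a with h' | h'
      · exact lt_trans (hNa j h') (by omega)
      · by_contra hτ
        push_neg at hτ
        -- a ≤ j ≤ y, τ j ≥ y + 1
        have hja : (j : ℕ) ≠ a := by
          intro h''
          have : j = A := Fin.ext h''
          rw [this] at hτ
          omega
        have hjy : (j : ℕ) ≠ y := by
          intro h''
          have : j = τ A := Fin.ext h''
          rw [this, hinv A] at hτ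
          rw [hAa] at hτ
          omega
        have hjblock := hblock j (by omega) (by omega)
        -- 3412 pattern at positions A < j < τ A < τ j
        apply h3412
        refine ⟨A, j, τ A, τ j, ?_, ?_, ?_, ?_, ?_, ?_⟩ <;> rw [Fin.lt_def]
        · omega
        · omega
        · omega
        · rw [hinv A, hinv j]; omega
        · rw [hinv j]; omega
        · omega
    -- τ (e-1) = a
    have hE : e - 1 < n := by omega
    set E : Fin n := ⟨e - 1, hE⟩ with hEdef
    have hτA : τ A = E := Fin.ext step1
    have hτE : (τ E : ℕ) = a := by rw [← hτA, hinv A]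
    -- Step 2 : interior points fixed
    have step2 : ∀ j : Fin n, a < (j : ℕ) → (j : ℕ) < e - 1 → (τ j : ℕ) = (j : ℕ) := by
      intro j hj1 hj2
      have hjb := hblock j (by omega) (by omega)
      have hne1 : (τ j : ℕ) ≠ a := by
        intro h'
        have : τ j = A := Fin.ext h'
        have := congrArg τ this
        rw [hinv j, hτA] at this
        rw [this] at hj2
        simp [hEdef] at hj2
      have hne2 : (τ j : ℕ) ≠ e - 1 := by
        intro h'
        have : τ j = E := Fin.ext h'
        have := congrArg τ this
        rw [hinv j] at this
        rw [this] at hj1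
        rw [hτE] at hj1
        omega
      by_contra hne
      push_neg at hne
      rcases Nat.lt_or_ge (τ j : ℕ) (j : ℕ) with h' | h'
      · -- 4321 at positions A < τ j < j < E
        apply h4321
        refine ⟨A, τ j, j, E, ?_, ?_, ?_, ?_, ?_, ?_⟩ <;> rw [Fin.lt_def]
        · show a < _; omega
        · omega
        · show (j : ℕ) < e - 1; omega
        · rw [hτE]; omega
        · rw [hinv j]; omega
        · rw [hinv j, hτA]; show (j : ℕ) < e - 1; omega
      · have h'' : (j : ℕ) < (τ j : ℕ) := by omega
        apply h4321
        refine ⟨A, j, τ j, E, ?_, ?_, ?_, ?_, ?_, ?_⟩ <;> rw [Fin.lt_def]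
        · show a < _; omega
        · omega
        · show ((τ j : Fin n) : ℕ) < e - 1; omega
        · rw [hτE, hinv j]; omega
        · rw [hinv j]; omega
        · rw [hτA]; show ((τ j : Fin n) : ℕ) < e - 1; omega
    -- conclude
    rcases Nat.lt_or_ge a (i : ℕ) with hia | hia
    · rcases Nat.lt_or_ge (i : ℕ) (e - 1) with hie | hie
      · have := step2 i hia hie
        have hfi : fmap n cut (i : ℕ) = (i : ℕ) := by
          rw [fmap_eq_of ha.symm he.symm, if_neg (by omega), if_neg (by omega)]
        omega
      · have hie' : (i : ℕ) = e - 1 := by omega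
        have hiE : i = E := Fin.ext hie'
        have hv : (τ i : ℕ) = a := by rw [hiE, hτE]
        have hfi : fmap n cut (i : ℕ) = a := by
          rw [fmap_eq_of ha.symm he.symm, if_neg (by omega), if_pos hie']
        omega
    · have hiA : i = A := Fin.ext (by omega : (i : ℕ) = a)
      have hv : (τ i : ℕ) = e - 1 := by rw [hiA, hτA]
      have hfi : fmap n cut (i : ℕ) = e - 1 := by
        rw [fmap_eq_of ha.symm he.symm, if_pos (by omega)]
      omega

end ClaimA

lemma aa_congr {cut1 cut2 : ℕ → Bool} {i : ℕ} (h : ∀ c ≤ i, cut1 c = cut2 c) :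
    aa cut1 i = aa cut2 i := by
  induction i with
  | zero =>
    show Nat.findGreatest _ 0 = Nat.findGreatest _ 0
    rfl
  | succ k ih =>
    show Nat.findGreatest _ (k+1) = Nat.findGreatest _ (k+1)
    rw [Nat.findGreatest_succ, Nat.findGreatest_succ, h (k+1) le_rfl,
      show Nat.findGreatest (fun c => cut1 c = true) k
          = Nat.findGreatest (fun c => cut2 c = true) k from
        ih (fun c hc => h c (le_trans hc (Nat.le_succ k)))]

lemma ee_congr {n : ℕ} {cut1 cut2 : ℕ → Bool} (h : ∀ c ≤ n, cut1 c = cut2 c)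
    (hn1 : cut1 n = true) {i : ℕ} (hi : i < n) : ee n cut1 i = ee n cut2 i := by
  have hn2 : cut2 n = true := by rw [← h n le_rfl]; exact hn1
  refine le_antisymm (Nat.find_le ⟨lt_ee n cut2 i, Or.inl ?_⟩)
    (Nat.find_le ⟨lt_ee n cut1 i, Or.inl ?_⟩)
  · rw [h _ (ee_le hn2 hi)]; exact ee_cut (ee_le hn2 hi)
  · rw [← h _ (ee_le hn1 hi)]; exact ee_cut (ee_le hn1 hi)

lemma fmap_congr {n : ℕ} {cut1 cut2 : ℕ → Bool} (h : ∀ c ≤ n, cut1 c = cut2 c)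
    (hn1 : cut1 n = true) {i : ℕ} (hi : i < n) : fmap n cut1 i = fmap n cut2 i := by
  unfold fmap
  rw [aa_congr (fun c hc => h c (le_trans hc hi.le)), ee_congr h hn1 hi]

/-- the symmetric cut set encoded by a function `Fin (n/2) → Bool` -/
def cutB (n : ℕ) (b : Fin (n/2) → Bool) : ℕ → Bool := fun c =>
  if c = 0 ∨ c = n then true
  else if h : min c (n - c) - 1 < n / 2 then b ⟨min c (n - c) - 1, h⟩ else false

lemma cutB_zero (n : ℕ) (b : Fin (n/2) → Bool) : cutB n b 0 = true := by
  simp [cutB]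

lemma cutB_n (n : ℕ) (b : Fin (n/2) → Bool) : cutB n b n = true := by
  simp [cutB]

lemma cutB_sym (n : ℕ) (b : Fin (n/2) → Bool) : ∀ c ≤ n, cutB n b (n - c) = cutB n b c := by
  intro c hc
  by_cases hc0 : c = 0
  · subst hc0; simp [cutB]
  by_cases hcn : c = n
  · subst hcn; simp [cutB]
  have h1 : n - c ≠ 0 := by omega
  have h2 : n - c ≠ n := by omega
  unfold cutB
  rw [if_neg (by omega), if_neg (by omega)]
  rw [show n - (n - c) = c from by omega, min_comm (n - c) c]

lemma cutB_eval (n : ℕ) (b : Fin (n/2) → Bool) {c : ℕ} (h1 : 1 ≤ c) (h2 : c ≤ n/2) :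
    cutB n b c = b ⟨c - 1, by omega⟩ := by
  unfold cutB
  rw [if_neg (by omega), show min c (n - c) = c from by omega, dif_pos (by omega)]

end CSI

open CSI in
def Phi (n : ℕ) (b : Fin (n/2) → Bool) :
    {τ : Equiv.Perm (Fin n) // τ * τ = 1 ∧ Centrosymmetric τ ∧ Av3412 τ ∧ Av4321 τ} :=
  ⟨tperm n (cutB_zero n b) (cutB_n n b),
    tperm_sq _ _, tperm_centro _ _ (cutB_sym n b), tperm_av3412 _ _, tperm_av4321 _ _⟩

open CSI in
lemma Phi_bijective (n : ℕ) : Function.Bijective (Phi n) := by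
  constructor
  · intro b1 b2 hb
    have hph : tperm n (cutB_zero n b1) (cutB_n n b1)
        = tperm n (cutB_zero n b2) (cutB_n n b2) := congrArg Subtype.val hb
    funext t
    have ht : (t : ℕ) + 1 ≤ n / 2 := t.isLt
    have hc : (t : ℕ) + 1 ≤ n := by omega
    have hiff : cutB n b1 ((t : ℕ) + 1) = true ↔ cutB n b2 ((t : ℕ) + 1) = true := by
      rw [← tperm_cut_iff (cutB_zero n b1) (cutB_n n b1) hc,
        ← tperm_cut_iff (cutB_zero n b2) (cutB_n n b2) hc, hph]
    rw [cutB_eval n b1 (by omega) ht, cutB_eval n b2 (by omega) ht] at hiff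
    have hfin : (⟨(t : ℕ) + 1 - 1, by omega⟩ : Fin (n/2)) = t := by
      apply Fin.ext; simp
    rw [hfin] at hiff
    exact Bool.eq_iff_iff.mpr hiff
  · rintro ⟨τ, hsq, hcent, h3412, h4321⟩
    have hinv : ∀ i, τ (τ i) = i := by
      intro i
      have := Equiv.ext_iff.mp hsq i
      simpa [Equiv.Perm.mul_apply] using this
    refine ⟨fun t => cutOf τ ((t : ℕ) + 1), ?_⟩
    set b : Fin (n/2) → Bool := fun t => cutOf τ ((t : ℕ) + 1) with hbdef
    have key : ∀ c ≤ n, cutB n b c = cutOf τ c := by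
      intro c hc
      by_cases hc0 : c = 0
      · subst hc0; rw [cutB_zero, cutOf_zero]
      by_cases hcn : c = n
      · subst hcn; rw [cutB_n, cutOf_n]
      have hc1 : 1 ≤ c := by omega
      have hc2 : c < n := by omega
      set m := min c (n - c) with hm
      have hm1 : 1 ≤ m := by omega
      have hm2 : m ≤ n / 2 := by omega
      have hL : cutB n b c = cutOf τ m := by
        unfold cutB
        rw [if_neg (by omega), dif_pos (show m - 1 < n / 2 by omega)]
        show cutOf τ ((m - 1) + 1) = cutOf τ m
        rw [show m - 1 + 1 = m from by omega]
      rw [hL]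
      rcases le_or_gt (2 * c) n with h2c | h2c
      · rw [show m = c from by omega]
      · rw [show m = n - c from by omega]
        exact cutOf_sym hinv hcent c hc
    apply Subtype.ext
    apply Equiv.ext
    intro i
    apply Fin.ext
    show fmap n (cutB n b) (i : ℕ) = (τ i : ℕ)
    rw [fmap_congr key (cutB_n n b) i.isLt]
    exact (eq_fmap hinv h3412 h4321 i).symm

theorem card_centrosymmetric_involutions_avoiding_3412_4321 (n : ℕ) :
    Nat.card {τ : Equiv.Perm (Fin n) //
        τ * τ = 1 ∧ Centrosymmetric τ ∧ Av3412 τ ∧ Av4321 τ} =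
      2 ^ (n / 2) := by
  rw [← Nat.card_eq_of_bijective _ (Phi_bijective n)]
  rw [Nat.card_eq_fintype_card, Fintype.card_fun, Fintype.card_bool, Fintype.card_fin]
end
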